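/- arXiv:1907.10547 — 5 statements merged into one kernel-verified Lean document; each statement's English description precedes it below -/
import Mathlib

section
/- If a homology class α ∈ H_n(X;ℝ) is ℓ¹-invisible (i.e., its image under the map ι_n : H_n(X;ℝ) → H_n^{ℓ¹}(X;ℝ) induced by the inclusion of singular chains into ℓ¹-chains vanishes), then the ℓ¹-seminorm of α is zero. -/
set_option maxHeartbeats 1000000


open scoped BigOperators

noncomputable section

/-- The standard topological `n`-simplex. -/
def TopSimplex (n : ℕ) : Type :=
  {x : Fin (n + 1) → ℝ // (∀ i, 0 ≤ x i) ∧ ∑ i, x i = 1}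

instance (n : ℕ) : TopologicalSpace (TopSimplex n) :=
  instTopologicalSpaceSubtype

/-- The affine inclusion of the `i`-th face of the standard `(n+1)`-simplex. -/
def faceIncl {n : ℕ} (i : Fin (n + 2)) : C(TopSimplex n, TopSimplex (n + 1)) where
  toFun x := ⟨fun j => ∑ k ∈ Finset.univ.filter (fun k => i.succAbove k = j), x.1 k,
    fun j => Finset.sum_nonneg fun k _ => x.2.1 k, by
      simp only []
      rw [Finset.sum_fiberwise Finset.univ (fun k => i.succAbove k) x.1]
      exact x.2.2⟩
  continuous_toFun := by
    apply Continuous.subtype_mk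
    exact continuous_pi fun j =>
      continuous_finset_sum _ fun k _ => (continuous_apply k).comp continuous_subtype_val

/-- Singular `n`-simplices in `X`. -/
def SSimplex (X : Type*) [TopologicalSpace X] (n : ℕ) := C(TopSimplex n, X)

/-- Real singular `n`-chains: finite formal linear combinations of singular simplices. -/
abbrev Chains (X : Type*) [TopologicalSpace X] (n : ℕ) := SSimplex X n →₀ ℝ

/-- The ℓ¹-norm of a singular chain. -/
def chainNorm {X : Type*} [TopologicalSpace X] {n : ℕ} (c : Chains X n) : ℝ :=
  ∑ σ ∈ c.support, |c σ|

/-- The `i`-th face of a singular `(n+1)`-simplex. -/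
def sFace {X : Type*} [TopologicalSpace X] {n : ℕ} (σ : SSimplex X (n + 1)) (i : Fin (n + 2)) :
    SSimplex X n :=
  ContinuousMap.comp σ (faceIncl i)

/-- The singular boundary operator `∂ : C_{n+1}(X) → C_n(X)`. -/
def sBoundary {X : Type*} [TopologicalSpace X] {n : ℕ} (c : Chains X (n + 1)) : Chains X n :=
  c.sum fun σ a => ∑ i : Fin (n + 2), (a * (-1 : ℝ) ^ (i : ℕ)) • Finsupp.single (sFace σ i) (1 : ℝ)

/-- A singular `n`-cycle (every `0`-chain is a cycle). -/
def IsCycle {X : Type*} [TopologicalSpace X] : ∀ {n : ℕ}, Chains X n → Prop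
  | 0, _ => True
  | _ + 1, c => sBoundary c = 0

/-- ℓ¹-chains: possibly infinite ℓ¹-combinations of singular simplices. -/
abbrev L1Chains (X : Type*) [TopologicalSpace X] (n : ℕ) :=
  lp (fun _ : SSimplex X n => ℝ) 1

/-- The extended boundary operator on ℓ¹-chains, described coefficientwise. -/
def l1Boundary {X : Type*} [TopologicalSpace X] {n : ℕ} (b : L1Chains X (n + 1)) :
    SSimplex X n → ℝ :=
  fun τ => ∑' σ : SSimplex X (n + 1), b σ * sBoundary (Finsupp.single σ (1 : ℝ)) τ

/-- The class of a singular cycle `z` is ℓ¹-invisible if `z` bounds an ℓ¹-chain. -/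
def L1Invisible {X : Type*} [TopologicalSpace X] {n : ℕ} (z : Chains X n) : Prop :=
  ∃ b : L1Chains X (n + 1), ∀ τ, l1Boundary b τ = z τ

section Aux
variable {X : Type*} [TopologicalSpace X]

lemma succAbove_val {n : ℕ} (i : Fin (n+1)) (k : Fin n) :
    (i.succAbove k : ℕ) = if (k:ℕ) < (i:ℕ) then (k:ℕ) else (k:ℕ)+1 := by
  rw [Fin.succAbove]
  by_cases h : Fin.castSucc k < i
  · rw [if_pos h, if_pos (by simpa [Fin.lt_def] using h)]; rfl
  · rw [if_neg h, if_neg (by simpa [Fin.lt_def] using h)]; rfl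

lemma succAbove_comm {n : ℕ} (a : Fin (n+3)) (b : Fin (n+2)) (h : b.castSucc < a)
    (ha : a ≠ 0) (k : Fin (n+1)) :
    a.succAbove (b.succAbove k) = (b.castSucc).succAbove ((a.pred ha).succAbove k) := by
  have hb : (b:ℕ) < (a:ℕ) := by simpa [Fin.lt_def] using h
  apply Fin.ext
  simp only [succAbove_val, Fin.coe_castSucc, Fin.coe_pred]
  split_ifs <;> omega

lemma faceIncl_comp_apply {n : ℕ} (a : Fin (n+3)) (b : Fin (n+2)) (x : TopSimplex n)
    (m : Fin (n+3)) :
    ((faceIncl a) ((faceIncl b) x)).1 m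
      = ∑ k ∈ Finset.univ.filter (fun k => a.succAbove (b.succAbove k) = m), x.1 k := by
  show ∑ l ∈ Finset.univ.filter (fun l => a.succAbove l = m),
      (∑ k ∈ Finset.univ.filter (fun k => b.succAbove k = l), x.1 k) = _
  rw [Finset.sum_filter, Finset.sum_filter]
  have : ∀ l : Fin (n+2), (if a.succAbove l = m then
      (∑ k ∈ Finset.univ.filter (fun k => b.succAbove k = l), x.1 k) else 0)
      = ∑ k : Fin (n+1), if b.succAbove k = l then (if a.succAbove l = m then x.1 k else 0) else 0 := by
    intro l
    rw [Finset.sum_filter]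
    split_ifs with h
    · rfl
    · simp
  rw [Finset.sum_congr rfl (fun l _ => this l), Finset.sum_comm]
  refine Finset.sum_congr rfl fun k _ => ?_
  rw [Finset.sum_ite_eq Finset.univ (b.succAbove k)
    (fun l => if a.succAbove l = m then x.1 k else 0)]
  simp

lemma faceIncl_comp_eq {n : ℕ} {a a' : Fin (n+3)} {b b' : Fin (n+2)}
    (h : ∀ k : Fin (n+1), a.succAbove (b.succAbove k) = a'.succAbove (b'.succAbove k)) :
    (faceIncl a).comp (faceIncl b) = (faceIncl a').comp (faceIncl b') := by
  ext x
  apply Subtype.ext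
  funext m
  show ((faceIncl a) ((faceIncl b) x)).1 m = ((faceIncl a') ((faceIncl b') x)).1 m
  rw [faceIncl_comp_apply, faceIncl_comp_apply]
  refine Finset.sum_congr ?_ fun _ _ => rfl
  congr 1
  ext k
  simp [h k]


lemma sBoundary_single {n : ℕ} (σ : SSimplex X (n+1)) (a : ℝ) :
    sBoundary (Finsupp.single σ a)
      = ∑ i : Fin (n+2), (a * (-1:ℝ)^(i:ℕ)) • Finsupp.single (sFace σ i) (1:ℝ) := by
  rw [sBoundary, Finsupp.sum_single_index]
  simp

lemma sBoundary_single_smul {n : ℕ} (σ : SSimplex X (n+1)) (a : ℝ) :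
    sBoundary (Finsupp.single σ a) = a • sBoundary (Finsupp.single σ (1:ℝ)) := by
  rw [sBoundary_single, sBoundary_single, Finset.smul_sum]
  refine Finset.sum_congr rfl fun i _ => ?_
  rw [smul_smul, one_mul]

def bdryHom {n : ℕ} : Chains X (n+1) →ₗ[ℝ] Chains X n :=
  Finsupp.lsum ℝ fun σ => LinearMap.toSpanSingleton ℝ _ (sBoundary (Finsupp.single σ 1))

lemma sBoundary_eq {n : ℕ} (c : Chains X (n+1)) : sBoundary c = bdryHom c := by
  rw [sBoundary, bdryHom, Finsupp.lsum_apply]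
  refine Finsupp.sum_congr fun σ _ => ?_
  show _ = (c σ) • sBoundary (Finsupp.single σ (1:ℝ))
  rw [← sBoundary_single_smul, sBoundary_single]


lemma sBoundary_zero {n : ℕ} : sBoundary (0 : Chains X (n+1)) = 0 := by
  rw [sBoundary_eq, map_zero]

lemma sBoundary_add {n : ℕ} (c d : Chains X (n+1)) :
    sBoundary (c + d) = sBoundary c + sBoundary d := by
  rw [sBoundary_eq, sBoundary_eq, sBoundary_eq, map_add]

lemma sBoundary_sub {n : ℕ} (c d : Chains X (n+1)) :
    sBoundary (c - d) = sBoundary c - sBoundary d := by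
  rw [sBoundary_eq, sBoundary_eq, sBoundary_eq, map_sub]

lemma sBoundary_smul {n : ℕ} (a : ℝ) (c : Chains X (n+1)) :
    sBoundary (a • c) = a • sBoundary c := by
  rw [sBoundary_eq, sBoundary_eq, map_smul]

lemma sFace_sFace_eq {n : ℕ} (σ : SSimplex X (n+2)) {a a' : Fin (n+3)} {b b' : Fin (n+2)}
    (h : ∀ k : Fin (n+1), a.succAbove (b.succAbove k) = a'.succAbove (b'.succAbove k)) :
    sFace (sFace σ a) b = sFace (sFace σ a') b' := by
  show (σ.comp (faceIncl a)).comp (faceIncl b) = (σ.comp (faceIncl a')).comp (faceIncl b')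
  exact congrArg (fun f => ContinuousMap.comp σ f) (faceIncl_comp_eq h)

lemma sBoundary_sBoundary_single {n : ℕ} (σ : SSimplex X (n+2)) :
    sBoundary (sBoundary (Finsupp.single σ (1:ℝ))) = 0 := by
  rw [sBoundary_single, sBoundary_eq, map_sum]
  have step : ∀ i : Fin (n+3),
      bdryHom (((1:ℝ) * (-1:ℝ)^(i:ℕ)) • Finsupp.single (sFace σ i) (1:ℝ))
      = ∑ j : Fin (n+2),
          (((-1:ℝ)^(i:ℕ)) * ((-1:ℝ)^(j:ℕ))) • Finsupp.single (sFace (sFace σ i) j) (1:ℝ) := by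
    intro i
    rw [map_smul, ← sBoundary_eq, sBoundary_single, Finset.smul_sum]
    simp only [smul_smul, one_mul]
  rw [Finset.sum_congr rfl fun i _ => step i, ← Finset.sum_product']
  set f : Fin (n+3) × Fin (n+2) → Chains X n := fun p =>
    (((-1:ℝ)^(p.1:ℕ)) * ((-1:ℝ)^(p.2:ℕ))) • Finsupp.single (sFace (sFace σ p.1) p.2) (1:ℝ)
    with hf
  show ∑ p ∈ Finset.univ ×ˢ Finset.univ, f p = 0
  set g : Fin (n+3) × Fin (n+2) → Fin (n+3) × Fin (n+2) := fun p =>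
    if h : p.2.castSucc < p.1 then
      (p.2.castSucc, p.1.pred (Fin.pos_iff_ne_zero.mp (lt_of_le_of_lt (Fin.zero_le _) h)))
    else
      (p.2.succ, p.1.castPred (Fin.ne_last_of_lt (lt_of_le_of_lt (not_lt.mp h)
        (Fin.castSucc_lt_last _))))
    with hg
  have hval : ∀ p : Fin (n+3) × Fin (n+2),
      ((g p).1 : ℕ) = (if (p.2 : ℕ) < (p.1 : ℕ) then (p.2 : ℕ) else (p.2 : ℕ) + 1) ∧
      ((g p).2 : ℕ) = (if (p.2 : ℕ) < (p.1 : ℕ) then (p.1 : ℕ) - 1 else (p.1 : ℕ)) := by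
    intro p
    by_cases h : p.2.castSucc < p.1
    · simp only [hg]
      rw [dif_pos h]
      have : (p.2 : ℕ) < (p.1 : ℕ) := by simpa [Fin.lt_def] using h
      simp [this, Fin.coe_pred]
    · simp only [hg]
      rw [dif_neg h]
      have : ¬ ((p.2 : ℕ) < (p.1 : ℕ)) := by simpa [Fin.lt_def] using h
      simp [this, Fin.coe_castPred]
  have hface : ∀ p : Fin (n+3) × Fin (n+2),
      sFace (sFace σ p.1) p.2 = sFace (sFace σ (g p).1) (g p).2 := by
    intro p
    obtain ⟨h1, h2⟩ := hval p
    apply sFace_sFace_eq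
    intro k
    apply Fin.ext
    rw [succAbove_val, succAbove_val, succAbove_val, succAbove_val, h1, h2]
    by_cases h : (p.2 : ℕ) < (p.1 : ℕ) <;> simp only [h, if_true, if_false] <;>
      split_ifs <;> omega
  have hgg : ∀ p : Fin (n+3) × Fin (n+2), g (g p) = p := by
    intro p
    obtain ⟨h1, h2⟩ := hval p
    obtain ⟨h1', h2'⟩ := hval (g p)
    have hp2 : (p.2 : ℕ) < n + 2 := p.2.isLt
    have hp1 : (p.1 : ℕ) < n + 3 := p.1.isLt
    apply Prod.ext
    · apply Fin.ext
      rw [h1', h1, h2]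
      split_ifs <;> omega
    · apply Fin.ext
      rw [h2', h1, h2]
      split_ifs <;> omega
  have hgne : ∀ p : Fin (n+3) × Fin (n+2), g p ≠ p := by
    intro p hpe
    obtain ⟨h1, _⟩ := hval p
    have := congrArg (fun q : Fin (n+3) × Fin (n+2) => ((q.1 : ℕ))) hpe
    rw [h1] at this
    split_ifs at this <;> omega
  have hcoef : ∀ p : Fin (n+3) × Fin (n+2),
      ((-1:ℝ)^(p.1:ℕ)) * ((-1:ℝ)^(p.2:ℕ))
        + ((-1:ℝ)^((g p).1:ℕ)) * ((-1:ℝ)^((g p).2:ℕ)) = 0 := by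
    intro p
    obtain ⟨h1, h2⟩ := hval p
    rw [h1, h2]
    by_cases h : (p.2 : ℕ) < (p.1 : ℕ)
    · simp only [h, if_true]
      have ha : (p.1 : ℕ) = ((p.1 : ℕ) - 1) + 1 := by omega
      have key : (-1:ℝ)^((p.1:ℕ)) = (-1) * (-1:ℝ)^((p.1:ℕ)-1) := by
        conv_lhs => rw [ha]
        rw [pow_succ]; ring
      rw [key]; ring
    · simp only [h, if_false]
      rw [pow_succ]
      ring
  refine Finset.sum_ninvolution g ?_ (fun p _ => hgne p) (fun p => Finset.mk_mem_product
    (Finset.mem_univ _) (Finset.mem_univ _)) hgg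
  intro p
  rw [hf]
  simp only
  rw [← hface p, ← add_smul, hcoef p, zero_smul]

lemma sBoundary_sBoundary {n : ℕ} (c : Chains X (n+2)) :
    sBoundary (sBoundary c) = 0 := by
  induction c using Finsupp.induction_linear with
  | zero => rw [sBoundary_zero, sBoundary_zero]
  | add f g hf hg => rw [sBoundary_add, sBoundary_add, hf, hg, add_zero]
  | single σ a =>
      rw [sBoundary_single_smul, sBoundary_smul, sBoundary_sBoundary_single, smul_zero]


lemma dval_abs_sum_le {n : ℕ} (σ : SSimplex X (n+1)) (T : Finset (SSimplex X n)) :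
    ∑ τ ∈ T, |sBoundary (Finsupp.single σ (1:ℝ)) τ| ≤ ((n:ℝ) + 2) := by
  classical
  have hτ : ∀ τ : SSimplex X n, sBoundary (Finsupp.single σ (1:ℝ)) τ
      = ∑ i : Fin (n+2), (-1:ℝ)^(i:ℕ) * (if sFace σ i = τ then 1 else 0) := by
    intro τ
    rw [sBoundary_single, Finsupp.finset_sum_apply]
    refine Finset.sum_congr rfl fun i _ => ?_
    rw [Finsupp.smul_apply, Finsupp.single_apply, smul_eq_mul, one_mul]
  calc ∑ τ ∈ T, |sBoundary (Finsupp.single σ (1:ℝ)) τ|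
      ≤ ∑ τ ∈ T, ∑ i : Fin (n+2), |(-1:ℝ)^(i:ℕ) * (if sFace σ i = τ then 1 else 0)| := by
        refine Finset.sum_le_sum fun τ _ => ?_
        rw [hτ τ]
        exact Finset.abs_sum_le_sum_abs _ _
    _ = ∑ i : Fin (n+2), ∑ τ ∈ T, |(-1:ℝ)^(i:ℕ) * (if sFace σ i = τ then 1 else 0)| :=
        Finset.sum_comm
    _ ≤ ∑ _i : Fin (n+2), (1:ℝ) := by
        refine Finset.sum_le_sum fun i _ => ?_
        have he : ∀ τ ∈ T, |(-1:ℝ)^(i:ℕ) * (if sFace σ i = τ then 1 else 0)|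
            = if sFace σ i = τ then 1 else 0 := by
          intro τ _
          rw [abs_mul, abs_pow, abs_neg, abs_one, one_pow, one_mul]
          split_ifs <;> simp
        rw [Finset.sum_congr rfl he, Finset.sum_ite_eq T (sFace σ i) (fun _ => (1:ℝ))]
        split_ifs <;> norm_num
    _ = ((n:ℝ) + 2) := by
        rw [Finset.sum_const, Finset.card_univ, Fintype.card_fin]
        ring

lemma isCycle_sub_sBoundary {n : ℕ} (z : Chains X n) (hz : IsCycle z) (b₀ : Chains X (n+1)) :
    IsCycle (z - sBoundary b₀) := by
  cases n with
  | zero => trivial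
  | succ m =>
      show sBoundary (z - sBoundary b₀) = 0
      have hz0 : sBoundary z = 0 := hz
      rw [sBoundary_sub, hz0, sBoundary_sBoundary, sub_zero]

end Aux


/-- If a singular cycle represents an ℓ¹-invisible class, then the ℓ¹-seminorm of its
homology class (the infimum of the norms of homologous cycles) is zero. -/
theorem seminorm_eq_zero_of_l1Invisible {X : Type*} [TopologicalSpace X] {n : ℕ}
    (z : Chains X n) (hz : IsCycle z) (hinv : L1Invisible z) :
    sInf {r : ℝ | ∃ z' : Chains X n, IsCycle z' ∧
      (∃ b₀ : Chains X (n + 1), z - z' = sBoundary b₀) ∧ r = chainNorm z'} = 0 := by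
  classical
  obtain ⟨b, hb⟩ := hinv
  set Dv : SSimplex X (n+1) → SSimplex X n → ℝ :=
    fun σ τ => sBoundary (Finsupp.single σ (1:ℝ)) τ with hDv
  set S : Set ℝ := {r : ℝ | ∃ z' : Chains X n, IsCycle z' ∧
      (∃ b₀ : Chains X (n + 1), z - z' = sBoundary b₀) ∧ r = chainNorm z'} with hS
  have hnonneg : ∀ r ∈ S, (0:ℝ) ≤ r := by
    rintro r ⟨z', _, _, rfl⟩
    exact Finset.sum_nonneg fun _ _ => abs_nonneg _
  have hbdd : BddBelow S := ⟨0, fun r hr => hnonneg r hr⟩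
  have hmem0 : chainNorm z ∈ S := ⟨z, hz, ⟨0, by rw [sBoundary_zero, sub_self]⟩, rfl⟩
  have hbt : ∀ τ, (∑' σ : SSimplex X (n+1), b σ * Dv σ τ) = z τ := hb
  have hsum : Summable (fun σ : SSimplex X (n+1) => |b σ|) := by
    have := (lp.memℓp b).summable (p := 1) (by norm_num)
    simpa [ENNReal.toReal_one, Real.rpow_one, Real.norm_eq_abs] using this
  have hDbound : ∀ (σ : SSimplex X (n+1)) (τ : SSimplex X n), |Dv σ τ| ≤ (n:ℝ)+2 := by
    intro σ τ
    have := dval_abs_sum_le σ {τ}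
    rwa [Finset.sum_singleton] at this
  have hsummable : ∀ τ, Summable fun σ : SSimplex X (n+1) => b σ * Dv σ τ := by
    intro τ
    refine Summable.of_norm_bounded (hsum.mul_right ((n:ℝ)+2)) fun σ => ?_
    rw [Real.norm_eq_abs, abs_mul]
    exact mul_le_mul_of_nonneg_left (hDbound σ τ) (abs_nonneg _)
  refine le_antisymm ?_ (le_csInf ⟨_, hmem0⟩ hnonneg)
  refine le_of_forall_pos_le_add fun ε hε => ?_
  rw [zero_add]
  have htail := tendsto_tsum_compl_atTop_zero (fun σ : SSimplex X (n+1) => |b σ|)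
  have hev := (tendsto_order.1 htail).2 (ε / ((n:ℝ)+3)) (by positivity)
  obtain ⟨S₀, hS₀⟩ := hev.exists
  set b₀ : Chains X (n+1) := ∑ σ ∈ S₀, Finsupp.single σ (b σ) with hb₀
  set z' : Chains X n := z - sBoundary b₀ with hz'
  have hmem : chainNorm z' ∈ S :=
    ⟨z', isCycle_sub_sBoundary z hz b₀, ⟨b₀, by rw [hz', sub_sub_cancel]⟩, rfl⟩
  refine le_trans (csInf_le hbdd hmem) ?_
  -- now bound chainNorm z'
  have hbd₀ : ∀ τ, (sBoundary b₀) τ = ∑ σ ∈ S₀, b σ * Dv σ τ := by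
    intro τ
    have hsb : sBoundary b₀
        = ∑ σ ∈ S₀, b σ • sBoundary (Finsupp.single σ (1:ℝ)) := by
      rw [hb₀, sBoundary_eq, map_sum]
      refine Finset.sum_congr rfl fun σ _ => ?_
      rw [← sBoundary_eq, sBoundary_single_smul]
    rw [hsb, Finsupp.finset_sum_apply]
    refine Finset.sum_congr rfl fun σ _ => ?_
    rw [Finsupp.smul_apply, smul_eq_mul]
  have hz'val : ∀ τ, z' τ = ∑' (σ : {σ : SSimplex X (n+1) // σ ∉ S₀}), b σ.1 * Dv σ.1 τ := by
    intro τ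
    have hsplit : (∑ σ ∈ S₀, (b : (σ : SSimplex X (n+1)) → ℝ) σ * Dv σ τ)
        + ∑' (σ : {σ : SSimplex X (n+1) // σ ∉ S₀}), b σ.1 * Dv σ.1 τ
        = ∑' σ : SSimplex X (n+1), b σ * Dv σ τ :=
      Summable.sum_add_tsum_compl (s := S₀) (hsummable τ)
    have h1 : z' τ = z τ - (sBoundary b₀) τ := by rw [hz', Finsupp.sub_apply]
    rw [h1, ← hbt τ, hbd₀]
    linarith [hsplit]
  have hsc : Summable (fun σ : {σ : SSimplex X (n+1) // σ ∉ S₀} => |b σ.1|) :=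
    hsum.subtype _
  have hsm : Summable (fun σ : {σ : SSimplex X (n+1) // σ ∉ S₀} => |b σ.1| * ((n:ℝ)+2)) :=
    hsc.mul_right _
  have habs : ∀ τ, Summable (fun σ : {σ : SSimplex X (n+1) // σ ∉ S₀} => |b σ.1 * Dv σ.1 τ|) := by
    intro τ
    refine hsm.of_nonneg_of_le (fun _ => abs_nonneg _) fun σ => ?_
    rw [abs_mul]
    exact mul_le_mul_of_nonneg_left (hDbound σ.1 τ) (abs_nonneg _)
  have hfin : Summable (fun σ : {σ : SSimplex X (n+1) // σ ∉ S₀} =>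
      ∑ τ ∈ z'.support, |b σ.1 * Dv σ.1 τ|) := by
    exact summable_sum fun τ _ => habs τ
  have hnorm : chainNorm z' ≤ ((ε / ((n:ℝ)+3))) * ((n:ℝ)+2) := by
    calc chainNorm z' = ∑ τ ∈ z'.support, |z' τ| := rfl
      _ ≤ ∑ τ ∈ z'.support, ∑' (σ : {σ : SSimplex X (n+1) // σ ∉ S₀}), |b σ.1 * Dv σ.1 τ| := by
          refine Finset.sum_le_sum fun τ _ => ?_
          rw [hz'val τ]
          have h2 := norm_tsum_le_tsum_norm
            (f := fun σ : {σ : SSimplex X (n+1) // σ ∉ S₀} => b σ.1 * Dv σ.1 τ)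
            (by simp only [Real.norm_eq_abs]; exact habs τ)
          simp only [Real.norm_eq_abs] at h2
          exact h2
      _ = ∑' (σ : {σ : SSimplex X (n+1) // σ ∉ S₀}), ∑ τ ∈ z'.support, |b σ.1 * Dv σ.1 τ| :=
          (Summable.tsum_finsetSum fun τ _ => habs τ).symm
      _ ≤ ∑' (σ : {σ : SSimplex X (n+1) // σ ∉ S₀}), |b σ.1| * ((n:ℝ)+2) := by
          refine Summable.tsum_le_tsum (fun σ => ?_) hfin hsm
          have he : ∑ τ ∈ z'.support, |b σ.1 * Dv σ.1 τ|
              = |b σ.1| * ∑ τ ∈ z'.support, |Dv σ.1 τ| := by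
            rw [Finset.mul_sum]
            exact Finset.sum_congr rfl fun τ _ => abs_mul _ _
          rw [he]
          exact mul_le_mul_of_nonneg_left (dval_abs_sum_le σ.1 _) (abs_nonneg _)
      _ = (∑' (σ : {σ : SSimplex X (n+1) // σ ∉ S₀}), |b σ.1|) * ((n:ℝ)+2) := tsum_mul_right
      _ ≤ ((ε / ((n:ℝ)+3))) * ((n:ℝ)+2) :=
          mul_le_mul_of_nonneg_right hS₀.le (by positivity)
  refine hnorm.trans ?_
  rw [div_mul_eq_mul_div, div_le_iff₀ (by positivity)]
  nlinarith [hε.le]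

end
end

section
/- Let Γ be an amenable group acting transitively on a set Λ, and let f ∈ ℓ₀(Λ) be a finitely supported real function. Then for every η > 0 there exists a finitely supported probability measure μ ∈ M₀(Γ) such that ‖μ∗f‖₁ ≤ |Σ_{x∈Λ} f(x)| + η. -/
open scoped BigOperators

/-- A left-invariant finitely additive probability measure on all subsets of `G`
(witnessing amenability). -/
def IsAmenable (G : Type*) [Group G] : Prop :=
  ∃ m : Set G → ℝ,
    (∀ A, 0 ≤ m A) ∧ m Set.univ = 1 ∧
    (∀ A B : Set G, Disjoint A B → m (A ∪ B) = m A + m B) ∧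
    (∀ (g : G) (A : Set G), m ((g * ·) '' A) = m A)

/-- `μ` is a finitely supported probability measure on `G`. -/
def IsProbMeasure {G : Type*} (μ : G →₀ ℝ) : Prop :=
  (∀ g, 0 ≤ μ g) ∧ μ.sum (fun _ a => a) = 1

/-- The ℓ¹-norm of a finitely supported real function. -/
def l1Norm {α : Type*} (f : α →₀ ℝ) : ℝ := ∑ x ∈ f.support, |f x|

/-- The diffusion operator: `(μ ∗ f) (x) = ∑_g μ(g) f(g⁻¹ x)`. -/
noncomputable def diffuse {G Λ : Type*} [Group G] [MulAction G Λ]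
    (μ : G →₀ ℝ) (f : Λ →₀ ℝ) : Λ →₀ ℝ :=
  μ.sum fun g a => a • Finsupp.mapDomain (fun x : Λ => g • x) f

set_option linter.unusedSectionVars false

namespace L1Aux

/-! ### ℓ¹-norm lemmas -/

variable {α β : Type*}

lemma l1Norm_eq_sum {v : α →₀ ℝ} {s : Finset α} (hs : v.support ⊆ s) :
    l1Norm v = ∑ x ∈ s, |v x| :=
  Finset.sum_subset hs (fun x _ hx => by
    simp [Finsupp.notMem_support_iff.mp hx])

lemma l1Norm_nonneg (v : α →₀ ℝ) : 0 ≤ l1Norm v :=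
  Finset.sum_nonneg fun _ _ => abs_nonneg _

@[simp] lemma l1Norm_zero : l1Norm (0 : α →₀ ℝ) = 0 := by simp [l1Norm]

lemma sum_abs_le_l1Norm (v : α →₀ ℝ) (t : Finset α) : (∑ y ∈ t, |v y|) ≤ l1Norm v := by
  classical
  rw [l1Norm_eq_sum (Finset.subset_union_right (s₁ := t))]
  exact Finset.sum_le_sum_of_subset_of_nonneg Finset.subset_union_left
    (fun _ _ _ => abs_nonneg _)

lemma l1Norm_add_le (v w : α →₀ ℝ) : l1Norm (v + w) ≤ l1Norm v + l1Norm w := by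
  classical
  rw [l1Norm_eq_sum (s := v.support ∪ w.support)
      (Finsupp.support_add.trans (le_refl _)),
    l1Norm_eq_sum (s := v.support ∪ w.support) Finset.subset_union_left,
    l1Norm_eq_sum (s := v.support ∪ w.support) Finset.subset_union_right,
    ← Finset.sum_add_distrib]
  exact Finset.sum_le_sum fun x _ => by simpa using abs_add_le (v x) (w x)

lemma l1Norm_neg (v : α →₀ ℝ) : l1Norm (-v) = l1Norm v := by
  simp [l1Norm, Finsupp.support_neg]

lemma l1Norm_smul (c : ℝ) (v : α →₀ ℝ) : l1Norm (c • v) = |c| * l1Norm v := by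
  rw [l1Norm_eq_sum (s := v.support) (Finsupp.support_smul), l1Norm, Finset.mul_sum]
  exact Finset.sum_congr rfl fun x _ => by simp [abs_mul]

lemma l1Norm_eq_zero {v : α →₀ ℝ} (h : l1Norm v = 0) : v = 0 := by
  ext x
  by_cases hx : x ∈ v.support
  · have h1 : |v x| ≤ 0 := by
      rw [← h]
      simpa using sum_abs_le_l1Norm v {x}
    have h2 : |v x| = 0 := le_antisymm h1 (abs_nonneg _)
    simpa using abs_eq_zero.mp h2
  · simpa using Finsupp.notMem_support_iff.mp hx

lemma l1Norm_sum_le {ι : Type*} (t : Finset ι) (w : ι → (α →₀ ℝ)) :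
    l1Norm (∑ i ∈ t, w i) ≤ ∑ i ∈ t, l1Norm (w i) := by
  classical
  induction t using Finset.induction with
  | empty => simp
  | insert a s hx ih =>
    rw [Finset.sum_insert hx, Finset.sum_insert hx]
    exact (l1Norm_add_le _ _).trans (by linarith)

lemma l1Norm_single (y : α) (c : ℝ) : l1Norm (Finsupp.single y c) = |c| := by
  rw [l1Norm_eq_sum (s := {y}) Finsupp.support_single_subset]
  simp

lemma l1Norm_mapDomain_le (k : α → β) (v : α →₀ ℝ) :
    l1Norm (Finsupp.mapDomain k v) ≤ l1Norm v := by
  classical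
  rw [Finsupp.mapDomain]
  refine (l1Norm_sum_le _ _).trans ?_
  rw [l1Norm]
  exact Finset.sum_le_sum fun x _ => (l1Norm_single _ _).le

lemma abs_total_le_l1Norm (v : α →₀ ℝ) : |v.sum fun _ a => a| ≤ l1Norm v := by
  rw [Finsupp.sum, l1Norm]
  exact Finset.abs_sum_le_sum_abs _ _

lemma l1Norm_equivMapDomain (e : α ≃ β) (v : α →₀ ℝ) :
    l1Norm (Finsupp.equivMapDomain e v) = l1Norm v := by
  classical
  refine le_antisymm ?_ ?_
  · rw [Finsupp.equivMapDomain_eq_mapDomain]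
    exact l1Norm_mapDomain_le _ _
  · conv_lhs => rw [show v = Finsupp.equivMapDomain e.symm (Finsupp.equivMapDomain e v) by
      simp [← Finsupp.equivMapDomain_trans]]
    rw [Finsupp.equivMapDomain_eq_mapDomain]
    exact l1Norm_mapDomain_le _ _

/-! ### The ℓ¹ normed space structure on finitely supported functions -/

noncomputable instance : NormedAddCommGroup (α →₀ ℝ) :=
  AddGroupNorm.toNormedAddCommGroup
    { toFun := l1Norm
      map_zero' := l1Norm_zero
      neg' := l1Norm_neg
      add_le' := l1Norm_add_le
      eq_zero_of_map_eq_zero' := fun _ => l1Norm_eq_zero }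

lemma norm_def (v : α →₀ ℝ) : ‖v‖ = l1Norm v := rfl

noncomputable instance : NormedSpace ℝ (α →₀ ℝ) where
  norm_smul_le c v := by rw [norm_def, norm_def, l1Norm_smul]; exact le_of_eq rfl

lemma phi_eq (φ : (α →₀ ℝ) →L[ℝ] ℝ) (w : α →₀ ℝ) :
    φ w = w.sum fun p c => c * φ (Finsupp.single p 1) := by
  induction w using Finsupp.induction_linear with
  | zero => simp
  | add u v hu hv =>
    rw [map_add, hu, hv, Finsupp.sum_add_index']
    · simp
    · intro p c₁ c₂; ring
  | single p c =>
    rw [Finsupp.sum_single_index (by simp)]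
    have h1 : Finsupp.single p c = c • Finsupp.single p 1 := by
      simp [Finsupp.smul_single]
    rw [h1, map_smul, smul_eq_mul]

/-! ### A finitely additive integral for finite-range functions -/

variable {X ι κ : Type*}

open Classical in
noncomputable def finRange (h : X → ℝ) : Finset ℝ :=
  if hf : (Set.range h).Finite then hf.toFinset else ∅

lemma finRange_eq {h : X → ℝ} (hf : (Set.range h).Finite) : finRange h = hf.toFinset := by
  simp [finRange, hf]

noncomputable def fInt (m : Set X → ℝ) (h : X → ℝ) : ℝ :=
  ∑ c ∈ finRange h, c * m (h ⁻¹' {c})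

variable {m : Set X → ℝ}

section basic
variable (m0 : ∀ A, 0 ≤ m A) (m1 : m Set.univ = 1)
  (madd : ∀ A B : Set X, Disjoint A B → m (A ∪ B) = m A + m B)

include madd in
lemma m_empty : m ∅ = 0 := by
  have := madd ∅ ∅ (disjoint_bot_left)
  simp at this
  linarith

include madd in
lemma madd_finset (s : Finset ι) (A : ι → Set X)
    (hdis : ∀ i ∈ s, ∀ j ∈ s, i ≠ j → Disjoint (A i) (A j)) :
    m (⋃ i ∈ s, A i) = ∑ i ∈ s, m (A i) := by
  classical
  induction s using Finset.induction with
  | empty => simp [m_empty madd]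
  | insert a s hx ih =>
    rw [Finset.set_biUnion_insert, Finset.sum_insert hx, madd _ _ ?_, ih ?_]
    · intro i hi j hj hij
      exact hdis i (Finset.mem_insert_of_mem hi) j (Finset.mem_insert_of_mem hj) hij
    · rw [Set.disjoint_iUnion₂_right]
      intro i hi
      exact hdis a (Finset.mem_insert_self a s) i (Finset.mem_insert_of_mem hi)
        (fun h => hx (h ▸ hi))

include madd in
lemma fInt_eq {h : X → ℝ} (hf : (Set.range h).Finite) {R : Finset ℝ}
    (hR : Set.range h ⊆ R) : fInt m h = ∑ c ∈ R, c * m (h ⁻¹' {c}) := by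
  rw [fInt, finRange_eq hf]
  refine Finset.sum_subset ?_ ?_
  · intro c hc
    exact hR (by simpa using hc)
  · intro c _ hc
    have : h ⁻¹' {c} = ∅ := by
      ext x
      simp only [Set.mem_preimage, Set.mem_singleton_iff, Set.mem_empty_iff_false, iff_false]
      intro hxc
      exact hc (by simpa [hf] using hxc ▸ Set.mem_range_self x)
    rw [this, m_empty madd, mul_zero]

include m1 madd in
lemma sum_m_fibers {h : X → ℝ} (hf : (Set.range h).Finite) :
    ∑ c ∈ hf.toFinset, m (h ⁻¹' {c}) = 1 := by
  rw [← madd_finset madd _ _ ?_]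
  · have : (⋃ c ∈ hf.toFinset, h ⁻¹' {c}) = Set.univ := by
      ext x
      simp only [Set.mem_iUnion, Set.mem_preimage, Set.mem_singleton_iff, Set.mem_univ, iff_true]
      exact ⟨h x, by simpa using Set.mem_range_self x, rfl⟩
    rw [this, m1]
  · intro i _ j _ hij
    rw [Set.disjoint_left]
    rintro x hx1 hx2
    exact hij ((Set.mem_preimage.mp hx1).symm.trans (Set.mem_preimage.mp hx2))

include m0 m1 madd in
lemma fInt_ge {h : X → ℝ} (hf : (Set.range h).Finite) {u : ℝ} (hu : ∀ x, u ≤ h x) :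
    u ≤ fInt m h := by
  rw [fInt_eq madd hf (R := hf.toFinset) (by simp)]
  calc u = u * ∑ c ∈ hf.toFinset, m (h ⁻¹' {c}) := by rw [sum_m_fibers m1 madd hf, mul_one]
    _ = ∑ c ∈ hf.toFinset, u * m (h ⁻¹' {c}) := Finset.mul_sum _ _ _
    _ ≤ ∑ c ∈ hf.toFinset, c * m (h ⁻¹' {c}) := by
        refine Finset.sum_le_sum fun c hc => ?_
        obtain ⟨x, hx⟩ := (by simpa using hc : c ∈ Set.range h)
        exact mul_le_mul_of_nonneg_right (hx ▸ hu x) (m0 _)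

include madd in
lemma fInt_comp (k : X → ι) (hk : (Set.range k).Finite) (φf : ι → ℝ) :
    fInt m (fun x => φf (k x)) = ∑ i ∈ hk.toFinset, φf i * m (k ⁻¹' {i}) := by
  classical
  have hrange : Set.range (fun x => φf (k x)) = φf '' Set.range k := by
    rw [← Set.range_comp]; rfl
  have hfin : (Set.range (fun x => φf (k x))).Finite := by
    rw [hrange]; exact hk.image _
  set R : Finset ℝ := (hk.image φf).toFinset with hRdef
  have hsub : Set.range (fun x => φf (k x)) ⊆ R := by
    rw [hrange]; intro c hc; simpa [hRdef] using hc
  rw [fInt_eq madd hfin hsub]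
  rw [← Finset.sum_fiberwise_of_maps_to (g := φf) (t := R)
    (fun i hi => by simp only [hRdef, Set.Finite.mem_toFinset] at hi ⊢; exact Set.mem_image_of_mem _ hi)
    (fun i => φf i * m (k ⁻¹' {i}))]
  refine Finset.sum_congr rfl fun c hc => ?_
  have hfib : ((fun x => φf (k x)) ⁻¹' {c}) = ⋃ i ∈ hk.toFinset.filter (fun i => φf i = c), k ⁻¹' {i} := by
    ext x
    simp only [Set.mem_preimage, Set.mem_singleton_iff, Set.mem_iUnion, Finset.mem_filter,
      Set.Finite.mem_toFinset]
    constructor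
    · intro hx
      exact ⟨k x, ⟨Set.mem_range_self x, hx⟩, rfl⟩
    · rintro ⟨i, ⟨_, hi2⟩, rfl⟩
      exact hi2
  rw [hfib, madd_finset madd _ _ ?_]
  · rw [Finset.mul_sum]
    refine Finset.sum_congr rfl fun i hi => ?_
    have : φf i = c := (Finset.mem_filter.mp hi).2
    rw [this]
  · intro i _ j _ hij
    rw [Set.disjoint_left]
    rintro x hx1 hx2
    exact hij ((Set.mem_preimage.mp hx1).symm.trans (Set.mem_preimage.mp hx2))

lemma finite_range_add {h₁ h₂ : X → ℝ} (hf₁ : (Set.range h₁).Finite)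
    (hf₂ : (Set.range h₂).Finite) : (Set.range (fun x => h₁ x + h₂ x)).Finite := by
  have : Set.range (fun x => h₁ x + h₂ x) ⊆
      (fun p : ℝ × ℝ => p.1 + p.2) '' (Set.range h₁ ×ˢ Set.range h₂) := by
    rintro c ⟨x, rfl⟩
    exact ⟨(h₁ x, h₂ x), ⟨Set.mem_range_self x, Set.mem_range_self x⟩, rfl⟩
  exact ((hf₁.prod hf₂).image _).subset this

include madd in
lemma fInt_add {h₁ h₂ : X → ℝ} (hf₁ : (Set.range h₁).Finite) (hf₂ : (Set.range h₂).Finite) :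
    fInt m (fun x => h₁ x + h₂ x) = fInt m h₁ + fInt m h₂ := by
  classical
  set k : X → ℝ × ℝ := fun x => (h₁ x, h₂ x) with hkdef
  have hk : (Set.range k).Finite := by
    refine (hf₁.prod hf₂).subset ?_
    rintro p ⟨x, rfl⟩
    exact ⟨Set.mem_range_self x, Set.mem_range_self x⟩
  have e1 : fInt m h₁ = ∑ i ∈ hk.toFinset, i.1 * m (k ⁻¹' {i}) := by
    rw [← fInt_comp madd k hk Prod.fst]
  have e2 : fInt m h₂ = ∑ i ∈ hk.toFinset, i.2 * m (k ⁻¹' {i}) := by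
    rw [← fInt_comp madd k hk Prod.snd]
  have e3 : fInt m (fun x => h₁ x + h₂ x) = ∑ i ∈ hk.toFinset, (i.1 + i.2) * m (k ⁻¹' {i}) := by
    rw [← fInt_comp madd k hk (fun p => p.1 + p.2)]
  rw [e1, e2, e3, ← Finset.sum_add_distrib]
  refine Finset.sum_congr rfl fun i _ => by ring

include madd in
lemma fInt_neg {h : X → ℝ} (hf : (Set.range h).Finite) :
    fInt m (fun x => -(h x)) = -fInt m h := by
  rw [fInt_comp madd h hf Neg.neg, fInt_eq madd hf (R := hf.toFinset) (by simp),
    ← Finset.sum_neg_distrib]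
  exact Finset.sum_congr rfl fun c _ => by ring

lemma finite_range_sum (s : Finset ι) (f : ι → X → ℝ)
    (hf : ∀ i ∈ s, (Set.range (f i)).Finite) :
    (Set.range (fun x => ∑ i ∈ s, f i x)).Finite := by
  classical
  induction s using Finset.induction with
  | empty =>
    refine Set.Finite.subset (Set.finite_singleton 0) ?_
    rintro c ⟨x, rfl⟩; simp
  | insert a s hx ih =>
    have : (Set.range (fun x => f a x + ∑ i ∈ s, f i x)).Finite :=
      finite_range_add (hf a (Finset.mem_insert_self _ _))
        (ih fun i hi => hf i (Finset.mem_insert_of_mem hi))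
    refine this.subset ?_
    rintro c ⟨x, rfl⟩
    exact ⟨x, by simp [Finset.sum_insert hx]⟩

include madd in
lemma fInt_sum (s : Finset ι) (f : ι → X → ℝ)
    (hf : ∀ i ∈ s, (Set.range (f i)).Finite) :
    fInt m (fun x => ∑ i ∈ s, f i x) = ∑ i ∈ s, fInt m (f i) := by
  classical
  induction s using Finset.induction with
  | empty =>
    simp only [Finset.sum_empty]
    have hz : fInt m (fun _ : X => (0:ℝ)) =
        ∑ c ∈ finRange (fun _ : X => (0:ℝ)), c * m ((fun _ : X => (0:ℝ)) ⁻¹' {c}) := rfl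
    rw [hz]
    have hfin0 : (Set.range (fun _ : X => (0:ℝ))).Finite :=
      Set.Finite.subset (Set.finite_singleton 0) (by rintro c ⟨x, rfl⟩; simp)
    have hsub : finRange (fun _ : X => (0:ℝ)) ⊆ {0} := by
      intro c hc
      rw [finRange_eq hfin0] at hc
      simp only [Set.Finite.mem_toFinset] at hc
      obtain ⟨x, rfl⟩ := hc
      simp
    refine Finset.sum_eq_zero fun c hc => ?_
    have : c = 0 := by simpa using hsub hc
    simp [this]
  | insert a s hx ih =>
    have hrw : (fun x => ∑ i ∈ insert a s, f i x) = fun x => f a x + ∑ i ∈ s, f i x := by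
      funext x; rw [Finset.sum_insert hx]
    rw [hrw, fInt_add madd (hf a (Finset.mem_insert_self _ _))
        (finite_range_sum s f fun i hi => hf i (Finset.mem_insert_of_mem hi)),
      ih (fun i hi => hf i (Finset.mem_insert_of_mem hi)), Finset.sum_insert hx]

end basic

section group
variable {G : Type*} [Group G] {mG : Set G → ℝ}

lemma fInt_translate (minv : ∀ (g : G) (A : Set G), mG ((g * ·) '' A) = mG A)
    (g : G) (h : G → ℝ) : fInt mG (fun b => h (g * b)) = fInt mG h := by
  have hr : Set.range (fun b => h (g * b)) = Set.range h := by
    ext c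
    constructor
    · rintro ⟨b, rfl⟩; exact ⟨g * b, rfl⟩
    · rintro ⟨b, rfl⟩; exact ⟨g⁻¹ * b, by simp⟩
  have hfr : finRange (fun b => h (g * b)) = finRange h := by
    by_cases hfin : (Set.range h).Finite
    · rw [finRange_eq hfin, finRange_eq (show (Set.range fun b => h (g * b)).Finite from hr ▸ hfin)]
      simpa [Set.Finite.toFinset_inj] using hr
    · rw [finRange, finRange, dif_neg (show ¬(Set.range fun b => h (g * b)).Finite from hr ▸ hfin),
        dif_neg hfin]
  rw [fInt, fInt, hfr]
  refine Finset.sum_congr rfl fun c _ => ?_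
  have hset : ((fun b => h (g * b)) ⁻¹' {c}) = (g⁻¹ * ·) '' (h ⁻¹' {c}) := by
    ext x
    simp only [Set.mem_preimage, Set.mem_singleton_iff, Set.mem_image]
    constructor
    · intro hx
      exact ⟨g * x, hx, by group⟩
    · rintro ⟨a, ha, rfl⟩
      simpa using ha
  rw [hset, minv]

end group

/-! ### Reiter's property from amenability (Day's argument) -/

lemma prob_single {G : Type*} (b : G) : IsProbMeasure (Finsupp.single b (1:ℝ)) := by
  classical
  constructor
  · intro g
    rw [Finsupp.single_apply]
    split <;> norm_num
  · rw [Finsupp.sum_single_index] <;> simp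

theorem leftReiter {G : Type*} [Group G] (hG : IsAmenable G) (T : Finset G) {ε : ℝ}
    (hε : 0 < ε) :
    ∃ μ : G →₀ ℝ, IsProbMeasure μ ∧
      ∀ g ∈ T, l1Norm (Finsupp.mapDomain (fun a => g * a) μ - μ) ≤ ε := by
  classical
  by_contra hcon
  push_neg at hcon
  obtain ⟨m, m0, m1, madd, minv⟩ := hG
  -- The joint difference operator
  set V : (G →₀ ℝ) →ₗ[ℝ] ((G × G) →₀ ℝ) :=
    ∑ g ∈ T, ((Finsupp.lmapDomain ℝ ℝ (fun a : G => (g, a))).comp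
      ((Finsupp.lmapDomain ℝ ℝ (fun a : G => g * a)) - LinearMap.id)) with hV
  have hVapply : ∀ μ : G →₀ ℝ, V μ = ∑ g ∈ T,
      Finsupp.mapDomain (fun a : G => (g, a))
        (Finsupp.mapDomain (fun a : G => g * a) μ - μ) := by
    intro μ
    rw [hV, LinearMap.sum_apply]
    refine Finset.sum_congr rfl fun g _ => ?_
    simp [Finsupp.lmapDomain_apply]
  have hinj : ∀ g₀ : G, Function.Injective (fun a : G => (g₀, a)) := by
    intro g₀ a b hab
    simpa using congrArg Prod.snd hab
  have hblock : ∀ (μ : G →₀ ℝ) (g₀ : G), g₀ ∈ T → ∀ a : G,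
      (V μ) (g₀, a) = (Finsupp.mapDomain (fun a : G => g₀ * a) μ - μ) a := by
    intro μ g₀ hg₀ a
    rw [hVapply, Finsupp.finset_sum_apply]
    rw [Finset.sum_eq_single g₀]
    · exact Finsupp.mapDomain_apply (hinj g₀) _ a
    · intro g _ hg
      refine Finsupp.mapDomain_notin_range _ _ ?_
      rintro ⟨x, hx⟩
      exact hg (congrArg Prod.fst hx)
    · intro h; exact absurd hg₀ h
  have hnormlb : ∀ μ : G →₀ ℝ, IsProbMeasure μ → ε < ‖V μ‖ := by
    intro μ hμ
    obtain ⟨g₀, hg₀, hgt⟩ := hcon μ hμ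
    set d := Finsupp.mapDomain (fun a : G => g₀ * a) μ - μ with hd
    have h1 : l1Norm d ≤ l1Norm (V μ) := by
      have h2 : l1Norm d = ∑ p ∈ d.support.map ⟨fun a : G => (g₀, a), hinj g₀⟩, |(V μ) p| := by
        rw [Finset.sum_map]
        refine Finset.sum_congr rfl fun a _ => ?_
        rw [Function.Embedding.coeFn_mk, hblock μ g₀ hg₀ a]
      rw [h2]
      exact sum_abs_le_l1Norm _ _
    calc ε < l1Norm d := hgt
      _ ≤ l1Norm (V μ) := h1
      _ = ‖V μ‖ := (norm_def _).symm
  set S : Set (G →₀ ℝ) := {μ | IsProbMeasure μ} with hS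
  have hSconv : Convex ℝ S := by
    intro μ₁ h₁ μ₂ h₂ a b ha hb hab
    constructor
    · intro x
      simp only [Finsupp.coe_add, Pi.add_apply, Finsupp.coe_smul, Pi.smul_apply, smul_eq_mul]
      exact add_nonneg (mul_nonneg ha (h₁.1 x)) (mul_nonneg hb (h₂.1 x))
    · rw [Finsupp.sum_add_index' (fun _ => rfl) (fun _ _ _ => rfl),
        Finsupp.sum_smul_index (fun _ => rfl), Finsupp.sum_smul_index (fun _ => rfl)]
      have e1 : (μ₁.sum fun _ c => a * c) = a * (μ₁.sum fun _ c => c) := by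
        rw [Finsupp.mul_sum]
      have e2 : (μ₂.sum fun _ c => b * c) = b * (μ₂.sum fun _ c => c) := by
        rw [Finsupp.mul_sum]
      rw [e1, e2, h₁.2, h₂.2, mul_one, mul_one, hab]
  have hCconv : Convex ℝ (V '' S) := hSconv.linear_image V
  have h0 : (0 : (G × G) →₀ ℝ) ∉ closure (V '' S) := by
    intro h0
    rw [Metric.mem_closure_iff] at h0
    obtain ⟨w, ⟨μ, hμ, rfl⟩, hw⟩ := h0 ε hε
    rw [dist_comm, dist_zero_right] at hw
    exact absurd hw (not_lt.mpr (hnormlb μ hμ).le)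
  obtain ⟨φ, u, hu0, hub⟩ :=
    geometric_hahn_banach_point_closed hCconv.closure isClosed_closure h0
  rw [map_zero] at hu0
  have hφV : ∀ μ ∈ S, u < φ (V μ) := fun μ hμ => hub _ (subset_closure ⟨μ, hμ, rfl⟩)
  set h : G × G → ℝ := fun p => φ (Finsupp.single p 1) with hh
  have hbd : ∀ p, |h p| ≤ ‖φ‖ := by
    intro p
    have h1 := φ.le_opNorm (Finsupp.single p 1)
    rw [norm_def, l1Norm_single] at h1
    simpa [Real.norm_eq_abs] using h1
  have hF : ∀ b : G, u < ∑ g ∈ T, (h (g, g * b) - h (g, b)) := by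
    intro b
    have hmem : Finsupp.single b (1:ℝ) ∈ S := prob_single b
    have h1 := hφV _ hmem
    have h2 : V (Finsupp.single b (1:ℝ)) =
        ∑ g ∈ T, (Finsupp.single (g, g * b) (1:ℝ) - Finsupp.single (g, b) 1) := by
      rw [hV, LinearMap.sum_apply]
      refine Finset.sum_congr rfl fun g _ => ?_
      simp only [LinearMap.comp_apply, LinearMap.sub_apply, LinearMap.id_apply]
      rw [map_sub]
      simp only [Finsupp.lmapDomain_apply, Finsupp.mapDomain_single]
    rw [h2, map_sum] at h1
    refine h1.trans_le (le_of_eq (Finset.sum_congr rfl fun g _ => ?_))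
    rw [map_sub]
  -- T is nonempty
  obtain ⟨g₁, hg₁, _⟩ := hcon (Finsupp.single 1 1) (prob_single 1)
  have hcard : (0:ℝ) < T.card := by
    have : 0 < T.card := Finset.card_pos.mpr ⟨g₁, hg₁⟩
    exact_mod_cast this
  -- rounding step
  set s₀ : ℝ := u / (8 * T.card) with hs₀
  have hs₀pos : 0 < s₀ := div_pos hu0 (by positivity)
  set r : G → G → ℝ := fun g b => s₀ * ⌊h (g, b) / s₀⌋ with hrdef
  have hrle : ∀ g b, r g b ≤ h (g, b) := by
    intro g b
    have h1 := Int.floor_le (h (g, b) / s₀)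
    have h2 : s₀ * (⌊h (g, b) / s₀⌋ : ℝ) ≤ s₀ * (h (g, b) / s₀) :=
      mul_le_mul_of_nonneg_left h1 hs₀pos.le
    calc r g b ≤ s₀ * (h (g, b) / s₀) := h2
      _ = h (g, b) := by field_simp
  have hrge : ∀ g b, h (g, b) - s₀ ≤ r g b := by
    intro g b
    have h1 := (Int.sub_one_lt_floor (h (g, b) / s₀)).le
    have h2 : s₀ * (h (g, b) / s₀ - 1) ≤ s₀ * (⌊h (g, b) / s₀⌋ : ℝ) :=
      mul_le_mul_of_nonneg_left h1 hs₀pos.le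
    calc h (g, b) - s₀ = s₀ * (h (g, b) / s₀ - 1) := by field_simp
      _ ≤ r g b := h2
  have hrfin : ∀ g, (Set.range (r g)).Finite := by
    intro g
    have hsub : Set.range (r g) ⊆
        (fun z : ℤ => s₀ * z) '' (Set.Icc ⌊(-‖φ‖) / s₀⌋ ⌊‖φ‖ / s₀⌋) := by
      rintro c ⟨b, rfl⟩
      refine ⟨⌊h (g, b) / s₀⌋, ?_, rfl⟩
      obtain ⟨hb1, hb2⟩ := abs_le.mp (hbd (g, b))
      constructor
      · exact Int.floor_le_floor (by apply div_le_div_of_nonneg_right hb1 hs₀pos.le)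
      · exact Int.floor_le_floor (by apply div_le_div_of_nonneg_right hb2 hs₀pos.le)
    exact ((Set.finite_Icc _ _).image _).subset hsub
  -- the discretized displacement function
  set F' : G → ℝ := fun b => ∑ g ∈ T, (r g (g * b) - r g b) with hF'def
  have hF'lb : ∀ b, u / 2 ≤ F' b := by
    intro b
    have h1 : ∑ g ∈ T, (h (g, g * b) - h (g, b) - s₀) ≤ F' b := by
      refine Finset.sum_le_sum fun g _ => ?_
      have := hrge g (g * b)
      have := hrle g b
      linarith
    have h2 : ∑ g ∈ T, (h (g, g * b) - h (g, b) - s₀) =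
        (∑ g ∈ T, (h (g, g * b) - h (g, b))) - T.card * s₀ := by
      rw [Finset.sum_sub_distrib, Finset.sum_const, nsmul_eq_mul]
    have h3 := hF b
    have h4 : (T.card : ℝ) * s₀ = u / 8 := by
      rw [hs₀]
      field_simp
    linarith
  have hfin1 : ∀ g : G, (Set.range (fun b => r g (g * b))).Finite := by
    intro g
    exact (hrfin g).subset (by rintro c ⟨b, rfl⟩; exact ⟨g * b, rfl⟩)
  have hfin2 : ∀ g : G, (Set.range (fun b => -(r g b))).Finite := by
    intro g
    refine ((hrfin g).image Neg.neg).subset ?_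
    rintro c ⟨b, rfl⟩
    exact ⟨r g b, ⟨b, rfl⟩, rfl⟩
  have hsummandfin : ∀ g ∈ T, (Set.range (fun b => r g (g * b) - r g b)).Finite := by
    intro g _
    refine (finite_range_add (hfin1 g) (hfin2 g)).subset ?_
    rintro c ⟨b, rfl⟩
    exact ⟨b, by ring⟩
  have hfinF' : (Set.range F').Finite := finite_range_sum T _ hsummandfin
  have hI1 : u / 2 ≤ fInt m F' := fInt_ge m0 m1 madd hfinF' hF'lb
  have hI2 : fInt m F' = 0 := by
    rw [hF'def, fInt_sum madd T _ hsummandfin]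
    refine Finset.sum_eq_zero fun g hg => ?_
    have e : (fun b => r g (g * b) - r g b) = fun b => r g (g * b) + (-(r g b)) := by
      funext b; ring
    rw [e, fInt_add madd (hfin1 g) (hfin2 g), fInt_translate minv g (r g),
      fInt_neg madd (hrfin g)]
    ring
  rw [hI2] at hI1
  linarith

/-! ### Assembling the main theorem -/

lemma prob_l1Norm {G : Type*} {ν : G →₀ ℝ} (hν : IsProbMeasure ν) : l1Norm ν = 1 := by
  have : l1Norm ν = ν.sum fun _ a => a := by
    rw [l1Norm, Finsupp.sum]
    exact Finset.sum_congr rfl fun x _ => abs_of_nonneg (hν.1 x)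
  rw [this, hν.2]

lemma diffuse_eq {G Λ : Type*} [Group G] [MulAction G Λ] (ν : G →₀ ℝ) (f : Λ →₀ ℝ) :
    diffuse ν f = ∑ x ∈ f.support, f x • Finsupp.mapDomain (fun g : G => g • x) ν := by
  rw [diffuse, Finsupp.sum]
  calc ∑ g ∈ ν.support, ν g • Finsupp.mapDomain (fun x : Λ => g • x) f
      = ∑ g ∈ ν.support, ∑ x ∈ f.support, Finsupp.single (g • x) (ν g * f x) := by
        refine Finset.sum_congr rfl fun g _ => ?_
        rw [Finsupp.mapDomain, Finsupp.sum, Finset.smul_sum]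
        refine Finset.sum_congr rfl fun x _ => ?_
        rw [Finsupp.smul_single, smul_eq_mul]
    _ = ∑ x ∈ f.support, ∑ g ∈ ν.support, Finsupp.single (g • x) (ν g * f x) :=
        Finset.sum_comm
    _ = ∑ x ∈ f.support, f x • Finsupp.mapDomain (fun g : G => g • x) ν := by
        refine Finset.sum_congr rfl fun x _ => ?_
        rw [Finsupp.mapDomain, Finsupp.sum, Finset.smul_sum]
        refine Finset.sum_congr rfl fun g _ => ?_
        rw [Finsupp.smul_single, smul_eq_mul, mul_comm]

end L1Aux

open L1Aux in
theorem diffusion_almost_kills_transitive {G Λ : Type*} [Group G] [MulAction G Λ]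
    (hG : IsAmenable G) (htrans : MulAction.IsPretransitive G Λ)
    (f : Λ →₀ ℝ) {η : ℝ} (hη : 0 < η) :
    ∃ μ : G →₀ ℝ, IsProbMeasure μ ∧
      l1Norm (diffuse μ f) ≤ |f.sum fun _ a => a| + η := by
  classical
  by_cases hf0 : f = 0
  · refine ⟨Finsupp.single 1 1, prob_single 1, ?_⟩
    subst hf0
    have hd : diffuse (Finsupp.single (1:G) (1:ℝ)) (0 : Λ →₀ ℝ) = 0 := by
      rw [diffuse]
      simp [Finsupp.mapDomain_zero]
    rw [hd]
    simp only [l1Norm_zero, Finsupp.sum_zero_index, abs_zero, zero_add]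
    exact hη.le
  · obtain ⟨x₀, hx₀⟩ := Finsupp.support_nonempty_iff.mpr hf0
    have hex : ∀ x : Λ, ∃ g : G, g • x₀ = x := fun x => htrans.exists_smul_eq x₀ x
    choose σ hσ using hex
    have hLpos : (0:ℝ) < l1Norm f + 1 := by linarith [l1Norm_nonneg f]
    set ε : ℝ := η / (l1Norm f + 1) with hεdef
    have hε : 0 < ε := div_pos hη hLpos
    set T : Finset G := f.support.image (fun x => (σ x)⁻¹) with hT
    obtain ⟨μ, hμprob, hμ⟩ := leftReiter hG T hε
    set ν : G →₀ ℝ := Finsupp.mapDomain (fun k : G => k⁻¹) μ with hν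
    have hνe : ν = Finsupp.equivMapDomain (Equiv.inv G) μ := by
      rw [hν, Finsupp.equivMapDomain_eq_mapDomain]
      rfl
    have hνprob : IsProbMeasure ν := by
      constructor
      · intro a
        rw [hνe, Finsupp.equivMapDomain_apply]
        exact hμprob.1 _
      · rw [hν, Finsupp.sum_mapDomain_index (fun _ => rfl) (fun _ _ _ => rfl)]
        exact hμprob.2
    -- key estimate for each point of the support
    have hkey : ∀ x ∈ f.support,
        l1Norm (Finsupp.mapDomain (fun k : G => k * σ x) ν - ν) ≤ ε := by
      intro x hx
      have hTs : (σ x)⁻¹ ∈ T := Finset.mem_image.mpr ⟨x, hx, rfl⟩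
      have hre := hμ _ hTs
      have hcomp : Finsupp.mapDomain (fun k : G => k * σ x) ν =
          Finsupp.mapDomain (fun k : G => k⁻¹)
            (Finsupp.mapDomain (fun a : G => (σ x)⁻¹ * a) μ) := by
        rw [hν, ← Finsupp.mapDomain_comp, ← Finsupp.mapDomain_comp]
        congr 1
        funext k
        simp [Function.comp]
      have hsub : Finsupp.mapDomain (fun k : G => k * σ x) ν - ν =
          (Finsupp.lmapDomain ℝ ℝ (fun k : G => k⁻¹))
            (Finsupp.mapDomain (fun a : G => (σ x)⁻¹ * a) μ - μ) := by
        rw [map_sub]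
        simp only [Finsupp.lmapDomain_apply]
        rw [hcomp, hν]
      rw [hsub]
      simp only [Finsupp.lmapDomain_apply]
      have hinv : Finsupp.mapDomain (fun k : G => k⁻¹)
            (Finsupp.mapDomain (fun a : G => (σ x)⁻¹ * a) μ - μ) =
          Finsupp.equivMapDomain (Equiv.inv G)
            (Finsupp.mapDomain (fun a : G => (σ x)⁻¹ * a) μ - μ) := by
        rw [Finsupp.equivMapDomain_eq_mapDomain]
        rfl
      rw [hinv, l1Norm_equivMapDomain]
      exact hre
    -- decomposition of the diffusion
    set c : ℝ := f.sum fun _ a => a with hc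
    set πl : (G →₀ ℝ) →ₗ[ℝ] (Λ →₀ ℝ) := Finsupp.lmapDomain ℝ ℝ (fun g : G => g • x₀) with hπ
    have hdec : diffuse ν f = c • πl ν + ∑ x ∈ f.support,
        f x • (πl (Finsupp.mapDomain (fun k : G => k * σ x) ν - ν)) := by
      rw [diffuse_eq]
      have hterm : ∀ (ω : G →₀ ℝ) (x : Λ), Finsupp.mapDomain (fun g : G => g • x) ω =
          πl (Finsupp.mapDomain (fun k : G => k * σ x) ω) := by
        intro ω x
        rw [hπ]
        simp only [Finsupp.lmapDomain_apply]
        rw [← Finsupp.mapDomain_comp]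
        congr 1
        funext g
        simp only [Function.comp]
        rw [mul_smul, hσ x]
      calc ∑ x ∈ f.support, f x • Finsupp.mapDomain (fun g : G => g • x) ν
          = ∑ x ∈ f.support,
              (f x • πl ν + f x • (πl (Finsupp.mapDomain (fun k : G => k * σ x) ν - ν))) := by
            refine Finset.sum_congr rfl fun x hx => ?_
            rw [hterm ν x, map_sub, smul_sub]
            abel
        _ = c • πl ν + ∑ x ∈ f.support,
              f x • (πl (Finsupp.mapDomain (fun k : G => k * σ x) ν - ν)) := by
            rw [Finset.sum_add_distrib, ← Finset.sum_smul, hc, Finsupp.sum]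
    -- norm estimates
    have hπν : l1Norm (πl ν) ≤ 1 := by
      rw [hπ]
      simp only [Finsupp.lmapDomain_apply]
      exact (l1Norm_mapDomain_le _ _).trans (prob_l1Norm hνprob).le
    have hterm2 : l1Norm (∑ x ∈ f.support,
        f x • (πl (Finsupp.mapDomain (fun k : G => k * σ x) ν - ν))) ≤ η := by
      refine (l1Norm_sum_le _ _).trans ?_
      have hptwise : ∀ x ∈ f.support,
          l1Norm (f x • (πl (Finsupp.mapDomain (fun k : G => k * σ x) ν - ν))) ≤ |f x| * ε := by
        intro x hx
        rw [l1Norm_smul]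
        refine mul_le_mul_of_nonneg_left ?_ (abs_nonneg _)
        rw [hπ]
        simp only [Finsupp.lmapDomain_apply]
        exact (l1Norm_mapDomain_le _ _).trans (hkey x hx)
      refine (Finset.sum_le_sum hptwise).trans ?_
      rw [← Finset.sum_mul]
      have hsum : (∑ x ∈ f.support, |f x|) = l1Norm f := rfl
      rw [hsum]
      have heq : ε * (l1Norm f + 1) = η := by
        rw [hεdef]
        field_simp
      nlinarith [l1Norm_nonneg f, hε]
    refine ⟨ν, hνprob, ?_⟩
    rw [hdec]
    calc l1Norm (c • πl ν + ∑ x ∈ f.support,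
          f x • (πl (Finsupp.mapDomain (fun k : G => k * σ x) ν - ν)))
        ≤ l1Norm (c • πl ν) + l1Norm (∑ x ∈ f.support,
            f x • (πl (Finsupp.mapDomain (fun k : G => k * σ x) ν - ν))) := l1Norm_add_le _ _
      _ ≤ |c| * 1 + η := by
          refine add_le_add ?_ hterm2
          rw [l1Norm_smul]
          exact mul_le_mul_of_nonneg_left hπν (abs_nonneg _)
      _ = |c| + η := by ring
end

section
/- Let Γ be an amenable group acting on a set Λ, and let f ∈ ℓ₀(Λ) be a finitely supported function whose support is contained in a single Γ-orbit and which satisfies Σ_{x∈Λ} f(x) = 0. Then for every η > 0 there exists a finitely supported probability measure μ ∈ M₀(Γ) such that ‖μ∗f‖₁ ≤ η. -/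
open scoped BigOperators

/-! ### Auxiliary lemmas -/
section Measure
variable {G : Type*} {m : Set G → ℝ}

lemma m_empty (hadd : ∀ A B : Set G, Disjoint A B → m (A ∪ B) = m A + m B) : m ∅ = 0 := by
  have := hadd ∅ ∅ disjoint_bot_left
  simp only [Set.union_empty] at this
  linarith

lemma m_split (hadd : ∀ A B : Set G, Disjoint A B → m (A ∪ B) = m A + m B)
    (A S : Set G) : m A = m (A ∩ S) + m (A \ S) := by
  rw [← hadd _ _ (Set.disjoint_left.mpr fun x hx1 hx2 => hx2.2 hx1.2)]
  rw [Set.inter_union_diff]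

open Classical in
lemma keyA (h0 : ∀ A : Set G, 0 ≤ m A)
    (hadd : ∀ A B : Set G, Disjoint A B → m (A ∪ B) = m A + m B)
    {I : Type*} (c : I → ℝ) (S : I → Set G) (s : Finset I) :
    ∀ (T : Set G) (u : ℝ), (∀ k ∈ T, u ≤ ∑ i ∈ s, c i * (if k ∈ S i then (1:ℝ) else 0)) →
      u * m T ≤ ∑ i ∈ s, c i * m (S i ∩ T) := by
  classical
  induction s using Finset.induction_on with
  | empty =>
    intro T u hT
    simp only [Finset.sum_empty]
    rcases T.eq_empty_or_nonempty with rfl | ⟨k, hk⟩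
    · rw [m_empty hadd]; simp
    · have hu : u ≤ 0 := by simpa using hT k hk
      exact mul_nonpos_iff.2 (Or.inr ⟨hu, h0 T⟩)
  | @insert j s' hj ih =>
    intro T u hT
    have h1 : (u - c j) * m (T ∩ S j) ≤ ∑ i ∈ s', c i * m (S i ∩ (T ∩ S j)) := by
      refine ih (T ∩ S j) (u - c j) fun k hk => ?_
      have := hT k hk.1
      rw [Finset.sum_insert hj, if_pos hk.2] at this
      linarith
    have h2 : u * m (T \ S j) ≤ ∑ i ∈ s', c i * m (S i ∩ (T \ S j)) := by
      refine ih (T \ S j) u fun k hk => ?_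
      have := hT k hk.1
      rw [Finset.sum_insert hj, if_neg hk.2] at this
      linarith
    have key : ∀ i : I, m (S i ∩ T) = m (S i ∩ (T ∩ S j)) + m (S i ∩ (T \ S j)) := by
      intro i
      rw [m_split hadd (S i ∩ T) (S j), Set.inter_assoc, Set.inter_diff_assoc]
    have hsplit : ∑ i ∈ s', c i * m (S i ∩ T)
        = ∑ i ∈ s', c i * m (S i ∩ (T ∩ S j)) + ∑ i ∈ s', c i * m (S i ∩ (T \ S j)) := by
      rw [← Finset.sum_add_distrib]
      exact Finset.sum_congr rfl fun i _ => by rw [key i, mul_add]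
    have hmT : u * m T = u * m (T ∩ S j) + u * m (T \ S j) := by
      rw [m_split hadd T (S j)]; ring
    have hcj : c j * m (S j ∩ T) = c j * m (T ∩ S j) := by rw [Set.inter_comm]
    rw [Finset.sum_insert hj]
    linarith

end Measure
open Classical in
lemma keyB {G : Type*} [Group G] (m : Set G → ℝ)
    (h0 : ∀ A, 0 ≤ m A) (h1 : m Set.univ = 1)
    (hadd : ∀ A B : Set G, Disjoint A B → m (A ∪ B) = m A + m B)
    (hinv : ∀ (g : G) (A : Set G), m ((g * ·) '' A) = m A)
    {I : Type*} (s : Finset I) (c : I → ℝ) (h : I → G)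
    (Ψ : G → ℝ) (M : ℝ) (hΨ : ∀ g, |Ψ g| ≤ M)
    (hc : ∑ i ∈ s, c i = 0) {u : ℝ} (hu : 0 < u)
    (hpos : ∀ g : G, u ≤ ∑ i ∈ s, c i * Ψ (g * h i)) : False := by
  set L : ℝ := ∑ i ∈ s, |c i| with hL
  have hL0 : 0 ≤ L := Finset.sum_nonneg fun i _ => abs_nonneg _
  set ε : ℝ := u / (2 * (L + 1)) with hε
  have hε0 : 0 < ε := by positivity
  have hM0 : 0 ≤ M := le_trans (abs_nonneg _) (hΨ 1)
  set ν : G → ℤ := fun k => ⌊Ψ k / ε⌋ with hν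
  set B : ℤ := ⌈M / ε⌉ + 1 with hB
  have hνmem : ∀ k, ν k ∈ Finset.Icc (-B) B := by
    intro k
    have habs : |Ψ k / ε| ≤ M / ε := by
      rw [abs_div, abs_of_pos hε0]
      gcongr
      exact hΨ k
    obtain ⟨hlo, hhi⟩ := abs_le.1 habs
    rw [Finset.mem_Icc]
    constructor
    · refine Int.le_floor.2 ?_
      have h2' : M / ε ≤ ((⌈M / ε⌉ + 1 : ℤ) : ℝ) := by
        push_cast
        have := Int.le_ceil (M / ε)
        linarith
      rw [hB]; push_cast at h2' ⊢; linarith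
    · have e1 : ν k ≤ ⌊(M / ε : ℝ)⌋ := Int.floor_le_floor hhi
      have e2 := Int.floor_le_ceil (M / ε)
      rw [hB]; omega
  -- the level sets
  set A : ℤ → Set G := fun n => {k : G | ν k⁻¹ = n} with hA
  set N : Finset ℤ := Finset.Icc (-B) B with hN
  set SS : I × ℤ → Set G := fun p => (h p.1 * ·) '' A p.2 with hSS
  set cc : I × ℤ → ℝ := fun p => c p.1 * ((p.2 : ℝ) * ε) with hcc
  -- membership characterization
  have hmemS : ∀ (k : G) (p : I × ℤ), k ∈ SS p ↔ ν (k⁻¹ * h p.1) = p.2 := by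
    intro k p
    constructor
    · rintro ⟨w, hw, rfl⟩
      simpa [hA, mul_inv_rev] using hw
    · intro hk
      refine ⟨(h p.1)⁻¹ * k, ?_, by group⟩
      simpa [hA, mul_inv_rev] using hk
  -- floor approximation
  have hfloor : ∀ t : G, |(ν t : ℝ) * ε - Ψ t| ≤ ε := by
    intro t
    have h1' : (ν t : ℝ) ≤ Ψ t / ε := Int.floor_le _
    have h2' : Ψ t / ε - 1 < (ν t : ℝ) := Int.sub_one_lt_floor _
    have e1 : (ν t : ℝ) * ε ≤ Ψ t := by
      have := mul_le_mul_of_nonneg_right h1' hε0.le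
      rwa [div_mul_cancel₀ _ (ne_of_gt hε0)] at this
    have e2 : Ψ t - ε < (ν t : ℝ) * ε := by
      have := mul_lt_mul_of_pos_right h2' hε0
      rw [sub_mul, div_mul_cancel₀ _ (ne_of_gt hε0), one_mul] at this
      linarith
    rw [abs_le]
    constructor <;> linarith
  -- pointwise bound for the simple combination
  have hpoint : ∀ k : G, u / 2 ≤ ∑ p ∈ s ×ˢ N, cc p * (if k ∈ SS p then (1:ℝ) else 0) := by
    intro k
    rw [Finset.sum_product]
    have hinner : ∀ i ∈ s, ∑ n ∈ N, cc (i, n) * (if k ∈ SS (i, n) then (1:ℝ) else 0)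
        = c i * ((ν (k⁻¹ * h i) : ℝ) * ε) := by
      intro i _
      have : ∀ n ∈ N, cc (i, n) * (if k ∈ SS (i, n) then (1:ℝ) else 0)
          = if n = ν (k⁻¹ * h i) then c i * ((ν (k⁻¹ * h i) : ℝ) * ε) else 0 := by
        intro n _
        by_cases hn : n = ν (k⁻¹ * h i)
        · rw [if_pos hn, if_pos ((hmemS k (i, n)).2 hn.symm), mul_one]
          rw [hcc]; subst hn; rfl
        · rw [if_neg hn, if_neg (fun hmem => hn ((hmemS k (i, n)).1 hmem).symm), mul_zero]
      rw [Finset.sum_congr rfl this, Finset.sum_ite_eq' N (ν (k⁻¹ * h i)),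
        if_pos (hνmem (k⁻¹ * h i))]
    rw [Finset.sum_congr rfl hinner]
    have hterm : ∀ i ∈ s, c i * Ψ (k⁻¹ * h i) - |c i| * ε ≤ c i * ((ν (k⁻¹ * h i) : ℝ) * ε) := by
      intro i _
      have := hfloor (k⁻¹ * h i)
      have habs2 : |c i * ((ν (k⁻¹ * h i) : ℝ) * ε) - c i * Ψ (k⁻¹ * h i)| ≤ |c i| * ε := by
        rw [← mul_sub, abs_mul]
        exact mul_le_mul_of_nonneg_left (hfloor _) (abs_nonneg _)
      have := (abs_le.1 habs2).1
      linarith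
    have hsum1 : ∑ i ∈ s, (c i * Ψ (k⁻¹ * h i) - |c i| * ε)
        ≤ ∑ i ∈ s, c i * ((ν (k⁻¹ * h i) : ℝ) * ε) := Finset.sum_le_sum hterm
    rw [Finset.sum_sub_distrib, ← Finset.sum_mul] at hsum1
    have hLε : L * ε ≤ u / 2 := by
      have h2' : L * ε ≤ (L + 1) * ε := by nlinarith
      have h3' : (L + 1) * ε = u / 2 := by
        rw [hε]; field_simp
      linarith
    have := hpos k⁻¹
    linarith
  -- apply keyA
  have hkeyA := keyA h0 hadd cc SS (s ×ˢ N) Set.univ (u / 2)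
    (fun k _ => hpoint k)
  rw [h1, mul_one] at hkeyA
  have hzero : ∑ p ∈ s ×ˢ N, cc p * m (SS p ∩ Set.univ) = 0 := by
    have : ∀ p ∈ s ×ˢ N, cc p * m (SS p ∩ Set.univ) = c p.1 * (((p.2 : ℝ) * ε) * m (A p.2)) := by
      intro p _
      rw [Set.inter_univ, hSS, hinv, hcc]
      ring
    rw [Finset.sum_congr rfl this, Finset.sum_product]
    have h2' : ∀ x ∈ s, ∑ y ∈ N, c (x, y).1 * (((x, y).2 : ℝ) * ε * m (A (x, y).2))
        = c x * ∑ y ∈ N, ((y : ℝ) * ε * m (A y)) := by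
      intro x _
      rw [Finset.mul_sum]
    rw [Finset.sum_congr rfl h2', ← Finset.sum_mul, hc, zero_mul]
  linarith
section L1
variable {Λ : Type*}

instance fact_one_le_one_ennreal' : Fact ((1 : ENNReal) ≤ 1) := ⟨le_rfl⟩

lemma memℓp_finsupp (v : Λ →₀ ℝ) : Memℓp (fun x => v x) (1 : ENNReal) := by
  apply memℓp_gen
  apply summable_of_ne_finset_zero (s := v.support)
  intro x hx
  simp [Finsupp.notMem_support_iff.1 hx]

noncomputable def toL1 : (Λ →₀ ℝ) →ₗ[ℝ] lp (fun _ : Λ => ℝ) 1 where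
  toFun v := ⟨fun x => v x, memℓp_finsupp v⟩
  map_add' u v := by
    apply lp.ext
    funext x
    simp only [lp.coeFn_add, Pi.add_apply]
    rfl
  map_smul' a v := by
    apply lp.ext
    funext x
    simp only [lp.coeFn_smul, Pi.smul_apply]
    rfl

@[simp] lemma toL1_apply (v : Λ →₀ ℝ) (x : Λ) : (toL1 v : ∀ _ : Λ, ℝ) x = v x := rfl

lemma norm_toL1 (v : Λ →₀ ℝ) : ‖toL1 v‖ = l1Norm v := by
  rw [lp.norm_eq_tsum_rpow (by simp) (toL1 v)]
  simp only [ENNReal.toReal_one, Real.rpow_one, toL1_apply]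
  rw [tsum_eq_sum (s := v.support) (fun x hx => by simp [Finsupp.notMem_support_iff.1 hx])]
  simp [l1Norm, Real.norm_eq_abs]

end L1


theorem diffusion_kills_balanced_orbit_supported {G Λ : Type*} [Group G] [MulAction G Λ]
    (hG : IsAmenable G) (f : Λ →₀ ℝ) (x₀ : Λ)
    (hsupp : ∀ x ∈ f.support, x ∈ MulAction.orbit G x₀)
    (hsum : (f.sum fun _ a => a) = 0) {η : ℝ} (hη : 0 < η) :
    ∃ μ : G →₀ ℝ, IsProbMeasure μ ∧ l1Norm (diffuse μ f) ≤ η := by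
  classical
  obtain ⟨m, h0, h1, hadd, hinv⟩ := hG
  set TL : (G →₀ ℝ) →ₗ[ℝ] lp (fun _ : Λ => ℝ) 1 :=
    toL1.comp (Finsupp.linearCombination ℝ
      (fun g : G => Finsupp.mapDomain (fun x : Λ => g • x) f)) with hTL
  have hTdif : ∀ μ : G →₀ ℝ, TL μ = toL1 (diffuse μ f) := by
    intro μ
    rw [hTL]
    simp only [LinearMap.comp_apply, Finsupp.linearCombination_apply]
    rfl
  set P : Set (G →₀ ℝ) := {μ | IsProbMeasure μ} with hP
  have hPconv : Convex ℝ P := by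
    rintro μ hμ ν hν a b ha hb hab
    refine ⟨fun g => ?_, ?_⟩
    · simp only [Finsupp.coe_add, Finsupp.coe_smul, Pi.add_apply, Pi.smul_apply, smul_eq_mul]
      exact add_nonneg (mul_nonneg ha (hμ.1 g)) (mul_nonneg hb (hν.1 g))
    · rw [Finsupp.sum_add_index' (fun _ => rfl) (fun _ _ _ => rfl),
        Finsupp.sum_smul_index (fun _ => rfl), Finsupp.sum_smul_index (fun _ => rfl),
        ← Finsupp.mul_sum, ← Finsupp.mul_sum, hμ.2, hν.2, mul_one, mul_one, hab]
  set C : Set (lp (fun _ : Λ => ℝ) 1) := TL '' P with hC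
  have hCconv : Convex ℝ C := hPconv.linear_image TL
  by_cases h0K : (0 : lp (fun _ : Λ => ℝ) 1) ∈ closure C
  · rw [Metric.mem_closure_iff] at h0K
    obtain ⟨b, hbC, hb⟩ := h0K η hη
    obtain ⟨μ, hμP, rfl⟩ := hbC
    refine ⟨μ, hμP, ?_⟩
    have heq : l1Norm (diffuse μ f) = dist (0 : lp (fun _ : Λ => ℝ) 1) (TL μ) := by
      rw [dist_zero_left, hTdif, norm_toL1]
    rw [heq]
    exact le_of_lt hb
  · obtain ⟨φ, u, hφ0, hφC⟩ :=
      geometric_hahn_banach_point_closed hCconv.closure isClosed_closure h0K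
    have hu : 0 < u := by
      have hz : φ 0 = 0 := map_zero φ
      linarith [hφ0]
    set e : Λ → ℝ := fun y => φ (toL1 (Finsupp.single y 1)) with he
    have hebound : ∀ y, |e y| ≤ ‖φ‖ := by
      intro y
      have h2 := φ.le_opNorm (toL1 (Finsupp.single y (1:ℝ)))
      rw [norm_toL1, Real.norm_eq_abs] at h2
      have h3 : l1Norm (Finsupp.single y (1:ℝ)) = 1 := by
        rw [l1Norm, Finsupp.support_single_ne_zero _ one_ne_zero]
        simp
      rw [h3, mul_one] at h2
      exact h2
    set hfun : Λ → G := fun x => if hx : ∃ g : G, g • x₀ = x then hx.choose else 1 with hhfun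
    have hhx : ∀ x ∈ f.support, hfun x • x₀ = x := by
      intro x hx
      obtain ⟨g, hg⟩ := hsupp x hx
      have hex : ∃ g : G, g • x₀ = x := ⟨g, hg⟩
      rw [hhfun]
      dsimp only
      rw [dif_pos hex]
      exact hex.choose_spec
    set Ψ₀ : G → ℝ := fun w => e (w • x₀) with hΨ₀
    have hsingleP : ∀ g : G, (Finsupp.single g (1:ℝ)) ∈ P := by
      intro g
      refine ⟨fun k => ?_, ?_⟩
      · rw [Finsupp.single_apply]
        split <;> norm_num
      · rw [Finsupp.sum_single_index rfl]
    have hcomp : ∀ g : G, φ (TL (Finsupp.single g 1)) = ∑ x ∈ f.support, f x * e (g • x) := by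
      intro g
      have h4 : TL (Finsupp.single g 1) = toL1 (Finsupp.mapDomain (fun x : Λ => g • x) f) := by
        rw [hTdif]
        congr 1
        rw [diffuse, Finsupp.sum_single_index (by rw [zero_smul]), one_smul]
      rw [h4]
      have h5 : Finsupp.mapDomain (fun x : Λ => g • x) f
          = f.sum fun a b => Finsupp.single (g • a) b := rfl
      rw [h5]
      have h6 : φ (toL1 (f.sum fun a b => Finsupp.single (g • a) b))
          = f.sum fun a b => φ (toL1 (Finsupp.single (g • a) b)) := by
        rw [map_finsuppSum toL1, map_finsuppSum φ]
      rw [h6, Finsupp.sum]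
      refine Finset.sum_congr rfl fun x hx => ?_
      have h7 : Finsupp.single (g • x) (f x) = f x • Finsupp.single (g • x) (1:ℝ) := by
        rw [Finsupp.smul_single, smul_eq_mul, mul_one]
      rw [h7, map_smul, map_smul, smul_eq_mul]
    have hpos : ∀ g : G, u ≤ ∑ x ∈ f.support, f x * Ψ₀ (g * hfun x) := by
      intro g
      have h8 := hφC (TL (Finsupp.single g 1)) (subset_closure ⟨_, hsingleP g, rfl⟩)
      rw [hcomp g] at h8
      refine le_of_lt (lt_of_lt_of_le h8 (le_of_eq ?_))
      refine Finset.sum_congr rfl fun x hx => ?_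
      rw [hΨ₀]
      dsimp only
      rw [mul_smul, hhx x hx]
    exact (keyB m h0 h1 hadd hinv f.support (fun x => f x) hfun Ψ₀ ‖φ‖
      (fun w => hebound (w • x₀)) hsum hu hpos).elim
end

section
/- Let (C_*, ∂) be a normed chain complex and let c ∈ C_n be a cycle. Suppose there exist cycles c_i ∈ C_n and chains b_i ∈ C_{n+1} (i ∈ ℕ) with c₀ = c, ‖c_i‖ ≤ 2^{-i}‖c‖, c_i − c_{i+1} = ∂b_i, and ‖b_i‖ ≤ K·2^{-i}‖c‖ for a constant K. Then the infinite sum b̄ = Σ_{i∈ℕ} b_i converges in the metric completion of C_{n+1}, and c = ∂b̄ in the completed complex; hence the image of the homology class [c] in the homology of the completed complex vanishes. -/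
open UniformSpace in
/-- A piece `C_{n+2} --dF--> C_{n+1} --d--> C_n --d'--> C_{n-1}` of a normed chain complex,
cycles `c_i`, chains `b_i` as in the statement. The series `∑ b_i` converges in the completion
and its boundary is `c`, so the class of `c` dies in the homology of the completed complex. -/
theorem boundary_in_completion_of_diffusion_scheme
    {D E F : Type*}
    [NormedAddCommGroup D] [NormedSpace ℝ D]
    [NormedAddCommGroup E] [NormedSpace ℝ E]
    [NormedAddCommGroup F] [NormedSpace ℝ F]
    (d : F →L[ℝ] E) (d' : E →L[ℝ] D) (hcomplex : ∀ x : F, d' (d x) = 0)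
    (c : E) (hc : d' c = 0)
    (cseq : ℕ → E) (b : ℕ → F)
    (h0 : cseq 0 = c)
    (hcyc : ∀ i, d' (cseq i) = 0)
    (hnorm : ∀ i : ℕ, ‖cseq i‖ ≤ (2 : ℝ)⁻¹ ^ i * ‖c‖)
    (hbd : ∀ i, cseq i - cseq (i + 1) = d (b i))
    (K : ℝ) (hK : ∀ i : ℕ, ‖b i‖ ≤ K * ((2 : ℝ)⁻¹ ^ i * ‖c‖))
    (dbar : Completion F →L[ℝ] Completion E)
    (hdbar : ∀ x : F, dbar (x : Completion F) = ((d x : E) : Completion E)) :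
    Summable (fun i : ℕ => ((b i : F) : Completion F)) ∧
      ((c : E) : Completion E) = dbar (∑' i : ℕ, ((b i : F) : Completion F)) := by
  have hsum : Summable (fun i : ℕ => ((b i : F) : Completion F)) := by
    apply Summable.of_norm
    have hg : Summable (fun i : ℕ => K * ((2 : ℝ)⁻¹ ^ i * ‖c‖)) :=
      (((summable_geometric_of_lt_one (r := (2:ℝ)⁻¹) (by norm_num) (by norm_num)).mul_right ‖c‖).mul_left K)
    refine Summable.of_nonneg_of_le (fun i => norm_nonneg _) (fun i => ?_) hg
    rw [Completion.norm_coe]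
    exact hK i
  refine ⟨hsum, ?_⟩
  have hcoe : Continuous (fun x : E => (x : Completion E)) := Completion.continuous_coe E
  have hlim : Filter.Tendsto cseq Filter.atTop (nhds 0) := by
    have : Filter.Tendsto (fun i : ℕ => (2 : ℝ)⁻¹ ^ i * ‖c‖) Filter.atTop (nhds 0) := by
      simpa using (tendsto_pow_atTop_nhds_zero_of_lt_one (r := (2:ℝ)⁻¹) (by norm_num) (by norm_num)).mul_const ‖c‖
    exact squeeze_zero_norm hnorm this
  have hhas : HasSum (fun i : ℕ => ((d (b i) : E) : Completion E)) ((c : E) : Completion E) := by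
    rw [hasSum_iff_tendsto_nat_of_summable_norm]
    · have heq : ∀ n : ℕ, (∑ i ∈ Finset.range n, ((d (b i) : E) : Completion E))
          = (((c - cseq n : E)) : Completion E) := by
        intro n
        have : (∑ i ∈ Finset.range n, d (b i)) = c - cseq n := by
          rw [← h0]
          rw [← Finset.sum_range_sub' cseq n]
          exact Finset.sum_congr rfl fun i _ => (hbd i).symm
        rw [← this, ← Completion.coe_toComplL (𝕜 := ℝ) (E := E), map_sum]
      simp only [heq]
      have : Filter.Tendsto (fun n : ℕ => c - cseq n) Filter.atTop (nhds c) := by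
        simpa using (tendsto_const_nhds.sub hlim)
      exact (hcoe.tendsto c).comp this
    · apply Summable.of_nonneg_of_le (fun i => norm_nonneg _) (fun i => ?_)
        ((((summable_geometric_of_lt_one (r := (2:ℝ)⁻¹) (by norm_num) (by norm_num)).mul_right ‖c‖).mul_left K).mul_left ‖d‖)
      rw [Completion.norm_coe]
      calc ‖d (b i)‖ ≤ ‖d‖ * ‖b i‖ := d.le_opNorm _
        _ ≤ ‖d‖ * (K * ((2:ℝ)⁻¹ ^ i * ‖c‖)) := by
            have := hK i
            nlinarith [norm_nonneg d, norm_nonneg (b i)]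
  have := hsum.hasSum
  have hmap : HasSum (fun i : ℕ => dbar ((b i : F) : Completion F)) (dbar (∑' i : ℕ, ((b i : F) : Completion F))) :=
    (hsum.hasSum).mapL dbar
  simp only [hdbar] at hmap
  exact hhas.unique hmap
end

section
/- Let Γ act on the set Θ(n) of algebraic n-simplices of a multicomplex K by automorphisms, and suppose every element of Γ is simplicially homotopic to the identity. If c is a simplicial n-cycle and (μ_i)_{i∈ℕ} are finitely supported probability measures on Γ such that the iterated diffusions c_i = μ_i∗(μ_{i−1}∗(⋯∗(μ₁∗c))) satisfy ‖c_i‖₁ ≤ 2^{-i}‖c‖₁ for all i, then the image of the class [c] in the ℓ¹-homology H_n^{ℓ¹}(K) vanishes. -/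
open scoped BigOperators
attribute [local instance] Classical.propDecidable

noncomputable section

/-- A multicomplex, encoded by its sets of vertices and simplices: every simplex has a
non-empty finite vertex set, and for every non-empty subset `W` of the vertices of a simplex
there is a unique face with vertex set `W`, compatibly with iteration. -/
structure Multicomplex where
  V : Type
  S : Type
  vert : S → Finset V
  vert_nonempty : ∀ s, (vert s).Nonempty
  face : (s : S) → (W : Finset V) → W.Nonempty → W ⊆ vert s → S
  vert_face : ∀ s W h₁ h₂, vert (face s W h₁ h₂) = W
  face_self : ∀ s h₁ h₂, face s (vert s) h₁ h₂ = s
  face_face : ∀ s W₁ h₁ h₂ W₂ h₃ (h₄ : W₂ ⊆ W₁),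
    face (face s W₁ h₁ h₂) W₂ h₃ (by rw [vert_face]; exact h₄) = face s W₂ h₃ (h₄.trans h₂)

/-- An algebraic `n`-simplex of a multicomplex: a simplex together with an ordering (with
possible repetitions) of its vertices. -/
@[ext] structure AlgSimplex (K : Multicomplex) (n : ℕ) where
  Δ : K.S
  v : Fin (n + 1) → K.V
  surj : Finset.image v Finset.univ = K.vert Δ

namespace AlgSimplex

variable {K : Multicomplex}

/-- The `i`-th face of an algebraic `(n+1)`-simplex. -/
def faceAt {n : ℕ} (σ : AlgSimplex K (n + 1)) (i : Fin (n + 2)) : AlgSimplex K n :=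
  let w : Fin (n + 1) → K.V := σ.v ∘ i.succAbove
  let W : Finset K.V := Finset.image w Finset.univ
  if h : W = K.vert σ.Δ then ⟨σ.Δ, w, h⟩
  else
    ⟨K.face σ.Δ W (by exact Finset.image_nonempty.mpr Finset.univ_nonempty)
        (by
          rw [← σ.surj]
          exact Finset.image_subset_iff.mpr fun k _ =>
            Finset.mem_image_of_mem σ.v (Finset.mem_univ _)),
      w, (K.vert_face _ _ _ _).symm⟩

/-- The algebraic simplex obtained by permuting the vertices. -/
def perm {n : ℕ} (σ : AlgSimplex K n) (τ : Equiv.Perm (Fin (n + 1))) : AlgSimplex K n :=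
  ⟨σ.Δ, σ.v ∘ τ, by
    rw [← σ.surj, ← Finset.image_image, Finset.image_univ_equiv]⟩

end AlgSimplex

/-- Finite real simplicial chains on a multicomplex. -/
abbrev MChains (K : Multicomplex) (n : ℕ) := AlgSimplex K n →₀ ℝ

/-- The ℓ¹-norm of a simplicial chain. -/
def mchainNorm {K : Multicomplex} {n : ℕ} (c : MChains K n) : ℝ :=
  ∑ σ ∈ c.support, |c σ|

/-- The simplicial boundary operator. -/
def mBoundary {K : Multicomplex} {n : ℕ} (c : MChains K (n + 1)) : MChains K n :=
  c.sum fun σ a =>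
    ∑ i : Fin (n + 2), (a * (-1 : ℝ) ^ (i : ℕ)) • Finsupp.single (σ.faceAt i) (1 : ℝ)

/-- A simplicial automorphism of a multicomplex. -/
@[ext] structure Multicomplex.Aut (K : Multicomplex) where
  toV : K.V ≃ K.V
  toS : K.S ≃ K.S
  vert_map : ∀ s, K.vert (toS s) = (K.vert s).image toV

instance (K : Multicomplex) : Group K.Aut where
  one := ⟨Equiv.refl _, Equiv.refl _, by simp⟩
  mul g h := ⟨h.toV.trans g.toV, h.toS.trans g.toS, by
    intro s
    simp [g.vert_map, h.vert_map, Finset.image_image]⟩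
  inv g := ⟨g.toV.symm, g.toS.symm, by
    intro s
    have := g.vert_map (g.toS.symm s)
    simp at this
    rw [this, Finset.image_image]
    simp⟩
  mul_assoc a b c := by ext <;> rfl
  one_mul a := by ext <;> rfl
  mul_one a := by ext <;> rfl
  inv_mul_cancel a := by ext x <;> exact Equiv.symm_apply_apply _ _

/-- The action of an automorphism on algebraic simplices. -/
def Multicomplex.Aut.actSimplex {K : Multicomplex} (g : K.Aut) {n : ℕ}
    (σ : AlgSimplex K n) : AlgSimplex K n :=
  ⟨g.toS σ.Δ, g.toV ∘ σ.v, by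
    rw [g.vert_map, ← σ.surj, Finset.image_image]⟩

/-- The action of an automorphism on simplicial chains. -/
def Multicomplex.Aut.actChain {K : Multicomplex} (g : K.Aut) {n : ℕ}
    (c : MChains K n) : MChains K n :=
  Finsupp.mapDomain g.actSimplex c

/-- ℓ¹-chains on a multicomplex. -/
abbrev L1MChains (K : Multicomplex) (n : ℕ) := lp (fun _ : AlgSimplex K n => ℝ) 1

/-- The extended boundary operator on ℓ¹-chains, described coefficientwise. -/
def l1mBoundary {K : Multicomplex} {n : ℕ} (b : L1MChains K (n + 1)) :
    AlgSimplex K n → ℝ :=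
  fun τ => ∑' σ : AlgSimplex K (n + 1), b σ * mBoundary (Finsupp.single σ (1 : ℝ)) τ
section Aux

namespace Multicomplex

lemma face_congr (K : Multicomplex) (s : K.S) {W W' : Finset K.V}
    (h : W = W') (h₁ : W.Nonempty) (h₂ : W ⊆ K.vert s) :
    K.face s W h₁ h₂ = K.face s W' (h ▸ h₁) (h ▸ h₂) := by subst h; rfl

end Multicomplex

namespace AlgSimplex

variable {K : Multicomplex}

/-- A generalized face of an algebraic simplex, given by any reindexing map. -/
def subFace {m k : ℕ} (σ : AlgSimplex K m) (f : Fin (k + 1) → Fin (m + 1)) :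
    AlgSimplex K k :=
  ⟨K.face σ.Δ (Finset.image (σ.v ∘ f) Finset.univ)
      (Finset.image_nonempty.mpr Finset.univ_nonempty)
      (by
        rw [← σ.surj]
        exact Finset.image_subset_iff.mpr fun k _ =>
          Finset.mem_image_of_mem σ.v (Finset.mem_univ _)),
    σ.v ∘ f, (K.vert_face _ _ _ _).symm⟩

@[simp] lemma subFace_v {m k : ℕ} (σ : AlgSimplex K m) (f : Fin (k + 1) → Fin (m + 1)) :
    (σ.subFace f).v = σ.v ∘ f := rfl

lemma faceAt_eq_subFace {n : ℕ} (σ : AlgSimplex K (n + 1)) (i : Fin (n + 2)) :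
    σ.faceAt i = σ.subFace i.succAbove := by
  unfold faceAt subFace
  dsimp only
  split
  · next h =>
    refine AlgSimplex.ext ?_ rfl
    dsimp only
    rw [K.face_congr σ.Δ h, K.face_self]
  · rfl

lemma subFace_subFace {m k l : ℕ} (σ : AlgSimplex K (m + 1))
    (f : Fin (k + 1) → Fin (m + 2)) (g : Fin (l + 1) → Fin (k + 1)) :
    (σ.subFace f).subFace g = σ.subFace (f ∘ g) := by
  refine AlgSimplex.ext ?_ rfl
  show K.face (K.face σ.Δ _ _ _) _ _ _ = K.face σ.Δ _ _ _
  rw [K.face_face]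
  · rfl
  · exact Finset.image_subset_iff.mpr fun x _ =>
      Finset.mem_image_of_mem (σ.v ∘ f) (Finset.mem_univ _)

lemma faceAt_faceAt {n : ℕ} (σ : AlgSimplex K (n + 2)) (j : Fin (n + 3)) (i : Fin (n + 2)) :
    (σ.faceAt j).faceAt i = σ.subFace (j.succAbove ∘ i.succAbove) := by
  rw [faceAt_eq_subFace, faceAt_eq_subFace, subFace_subFace]

end AlgSimplex

lemma Fin.val_succAbove' {m : ℕ} (p : Fin (m + 1)) (k : Fin m) :
    (p.succAbove k).val = if k.val < p.val then k.val else k.val + 1 := by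
  rcases lt_or_ge (k.val) (p.val) with h | h
  · rw [Fin.succAbove_of_castSucc_lt _ _ (by simpa [Fin.lt_def] using h)]
    simp [h]
  · rw [Fin.succAbove_of_le_castSucc _ _ (by simpa [Fin.le_def] using h)]
    simp [Fin.val_succ, not_lt.mpr h]

lemma Fin.succAbove_succAbove_swap {n : ℕ} (i j : Fin (n + 2)) (hij : i ≤ j)
    (k : Fin (n + 1)) :
    (j.succ).succAbove (i.succAbove k) = (i.castSucc).succAbove (j.succAbove k) := by
  have hij' : (i : ℕ) ≤ (j : ℕ) := hij
  apply Fin.ext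
  rw [Fin.val_succAbove', Fin.val_succAbove', Fin.val_succAbove', Fin.val_succAbove',
    Fin.val_succ, Fin.coe_castSucc]
  split_ifs <;> omega

end Aux
section Bnd

variable {K : Multicomplex}

/-- The boundary operator as a linear map. -/
def bnd {K : Multicomplex} {n : ℕ} : MChains K (n + 1) →ₗ[ℝ] MChains K n :=
  Finsupp.linearCombination ℝ fun σ : AlgSimplex K (n + 1) =>
    ∑ i : Fin (n + 2), ((-1 : ℝ) ^ (i : ℕ)) • Finsupp.single (σ.faceAt i) (1 : ℝ)

lemma mBoundary_eq {n : ℕ} (c : MChains K (n + 1)) : mBoundary c = bnd c := by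
  rw [mBoundary, bnd, Finsupp.linearCombination_apply]
  refine Finsupp.sum_congr fun σ _ => ?_
  rw [Finset.smul_sum]
  exact Finset.sum_congr rfl fun i _ => (mul_smul _ _ _)

lemma bnd_single {n : ℕ} (σ : AlgSimplex K (n + 1)) :
    bnd (Finsupp.single σ (1 : ℝ)) =
      ∑ i : Fin (n + 2), ((-1 : ℝ) ^ (i : ℕ)) • Finsupp.single (σ.faceAt i) (1 : ℝ) := by
  rw [bnd, Finsupp.linearCombination_single, one_smul]

lemma bnd_bnd_single {n : ℕ} (σ : AlgSimplex K (n + 2)) :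
    bnd (bnd (Finsupp.single σ (1 : ℝ))) = 0 := by
  rw [bnd_single, map_sum]
  have : ∀ j : Fin (n + 3), ((-1 : ℝ) ^ (j : ℕ)) • bnd (Finsupp.single (σ.faceAt j) (1 : ℝ))
      = ∑ i : Fin (n + 2), ((-1 : ℝ) ^ ((j : ℕ) + (i : ℕ))) •
          Finsupp.single (σ.subFace (j.succAbove ∘ i.succAbove)) (1 : ℝ) := by
    intro j
    rw [bnd_single, Finset.smul_sum]
    refine Finset.sum_congr rfl fun i _ => ?_
    rw [σ.faceAt_faceAt j i, smul_smul, ← pow_add]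
  simp only [map_smul, this]
  rw [← Finset.sum_product']
  refine Finset.sum_involution
    (fun p _ => if h : (p.2 : ℕ) < (p.1 : ℕ)
      then (⟨(p.2 : ℕ), by omega⟩, ⟨(p.1 : ℕ) - 1, by omega⟩)
      else (⟨(p.2 : ℕ) + 1, by have := p.1.isLt; have := p.2.isLt; omega⟩,
            ⟨(p.1 : ℕ), by have := p.2.isLt; omega⟩))
    (fun p _ => ?_) (fun p _ _ => ?_) (fun p _ => Finset.mem_univ _) (fun p _ => ?_)
  · -- sum of the pair is zero
    rcases p with ⟨j, i⟩
    dsimp only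
    split_ifs with h
    · -- i < j
      have hfun : (j.succAbove ∘ i.succAbove) =
          ((⟨(i : ℕ), by omega⟩ : Fin (n + 3)).succAbove ∘
            (⟨(j : ℕ) - 1, by omega⟩ : Fin (n + 2)).succAbove) := by
        funext k
        apply Fin.ext
        simp only [Function.comp_apply, Fin.val_succAbove']
        split_ifs <;> omega
      rw [hfun, ← add_smul]
      convert zero_smul ℝ _
      have : (j : ℕ) + (i : ℕ) = ((i : ℕ) + ((j : ℕ) - 1)) + 1 := by omega
      rw [this, pow_succ]
      ring
    · -- j ≤ i
      push_neg at h
      have hfun : (j.succAbove ∘ i.succAbove) =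
          ((⟨(i : ℕ) + 1, by omega⟩ : Fin (n + 3)).succAbove ∘
            (⟨(j : ℕ), by omega⟩ : Fin (n + 2)).succAbove) := by
        funext k
        apply Fin.ext
        simp only [Function.comp_apply, Fin.val_succAbove']
        split_ifs <;> omega
      rw [hfun, ← add_smul]
      convert zero_smul ℝ _
      have : ((i : ℕ) + 1) + (j : ℕ) = ((j : ℕ) + (i : ℕ)) + 1 := by omega
      rw [this, pow_succ]
      ring
  · -- the involution has no fixed points
    rcases p with ⟨j, i⟩
    dsimp only
    split_ifs with h
    · intro hEq
      have := congrArg (fun q => (q.1 : ℕ)) hEq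
      simp at this; omega
    · intro hEq
      have := congrArg (fun q => (q.1 : ℕ)) hEq
      push_neg at h
      simp at this; omega
  · -- it is an involution
    rcases p with ⟨j, i⟩
    dsimp only
    split_ifs with h h2 h3
    · exfalso; simp at h2; omega
    · refine Prod.ext ?_ ?_ <;> apply Fin.ext <;> simp <;> omega
    · refine Prod.ext ?_ ?_ <;> apply Fin.ext <;> simp
    · exfalso; push_neg at h; simp at h3; omega

lemma bnd_bnd {n : ℕ} (c : MChains K (n + 2)) : bnd (bnd c) = 0 := by
  have : c = c.sum fun σ a => Finsupp.single σ a := (Finsupp.sum_single c).symm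
  rw [this, map_finsuppSum, map_finsuppSum]
  apply Finset.sum_eq_zero
  intro σ _
  show bnd (bnd (Finsupp.single σ (c σ))) = 0
  have h1 : Finsupp.single σ (c σ) = (c σ) • Finsupp.single σ (1 : ℝ) := by
    rw [Finsupp.smul_single, smul_eq_mul, mul_one]
  rw [h1, map_smul, map_smul, bnd_bnd_single, smul_zero]

lemma mBoundary_mBoundary {n : ℕ} (c : MChains K (n + 2)) :
    mBoundary (mBoundary c) = 0 := by
  rw [mBoundary_eq, mBoundary_eq, bnd_bnd]

end Bnd
section Norms

variable {K : Multicomplex} {n : ℕ}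

lemma mchainNorm_nonneg (c : MChains K n) : 0 ≤ mchainNorm c :=
  Finset.sum_nonneg fun _ _ => abs_nonneg _

lemma mchainNorm_eq_sum {c : MChains K n} {s : Finset (AlgSimplex K n)}
    (h : c.support ⊆ s) : mchainNorm c = ∑ σ ∈ s, |c σ| :=
  Finset.sum_subset h fun σ _ hσ => by
    rw [Finsupp.notMem_support_iff.mp hσ, abs_zero]

lemma abs_apply_le_mchainNorm (c : MChains K n) (τ : AlgSimplex K n) :
    |c τ| ≤ mchainNorm c := by
  by_cases h : τ ∈ c.support
  · exact Finset.single_le_sum (f := fun σ => |c σ|) (fun _ _ => abs_nonneg _) h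
  · rw [Finsupp.notMem_support_iff.mp h, abs_zero]
    exact mchainNorm_nonneg c

lemma mchainNorm_add_le (x y : MChains K n) :
    mchainNorm (x + y) ≤ mchainNorm x + mchainNorm y := by
  rw [mchainNorm_eq_sum (Finsupp.support_add (g₁ := x) (g₂ := y)),
    mchainNorm_eq_sum (Finset.subset_union_left (s₁ := x.support) (s₂ := y.support)),
    mchainNorm_eq_sum (Finset.subset_union_right (s₁ := x.support) (s₂ := y.support)),
    ← Finset.sum_add_distrib]
  exact Finset.sum_le_sum fun σ _ => by
    rw [Finsupp.add_apply]; exact abs_add_le _ _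

lemma mchainNorm_smul_le (a : ℝ) (x : MChains K n) :
    mchainNorm (a • x) ≤ |a| * mchainNorm x := by
  rw [mchainNorm_eq_sum (Finsupp.support_smul (b := a) (g := x)), mchainNorm,
    Finset.mul_sum]
  exact Finset.sum_le_sum fun σ _ => by
    rw [Finsupp.smul_apply, smul_eq_mul, abs_mul]

lemma mchainNorm_zero : mchainNorm (0 : MChains K n) = 0 := by
  simp [mchainNorm]

lemma mchainNorm_sum_le {ι : Type*} (s : Finset ι) (f : ι → MChains K n) :
    mchainNorm (∑ x ∈ s, f x) ≤ ∑ x ∈ s, mchainNorm (f x) := by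
  classical
  induction s using Finset.cons_induction with
  | empty => simp [mchainNorm_zero]
  | cons a s ha ih =>
    rw [Finset.sum_cons, Finset.sum_cons]
    exact (mchainNorm_add_le _ _).trans (by linarith)

lemma mchainNorm_single_one (τ : AlgSimplex K n) :
    mchainNorm (Finsupp.single τ (1 : ℝ)) = 1 := by
  rw [mchainNorm, Finsupp.support_single_ne_zero τ one_ne_zero]
  simp

lemma coef_bound (σ : AlgSimplex K (n + 1)) (τ : AlgSimplex K n) :
    |mBoundary (Finsupp.single σ (1 : ℝ)) τ| ≤ (n : ℝ) + 2 := by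
  refine (abs_apply_le_mchainNorm _ τ).trans ?_
  rw [mBoundary_eq, bnd_single]
  refine (mchainNorm_sum_le _ _).trans ?_
  have : ∀ i : Fin (n + 2),
      mchainNorm (((-1 : ℝ) ^ (i : ℕ)) • Finsupp.single (σ.faceAt i) (1 : ℝ)) ≤ 1 := by
    intro i
    refine (mchainNorm_smul_le _ _).trans ?_
    rw [abs_pow, abs_neg, abs_one, one_pow, one_mul, mchainNorm_single_one]
  refine (Finset.sum_le_sum fun i _ => this i).trans ?_
  rw [Finset.sum_const, Finset.card_univ, Fintype.card_fin, nsmul_eq_mul, mul_one]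
  push_cast
  linarith

end Norms
section More

variable {K : Multicomplex} {n : ℕ}

lemma mBoundary_add (x y : MChains K (n + 1)) :
    mBoundary (x + y) = mBoundary x + mBoundary y := by
  rw [mBoundary_eq, mBoundary_eq x, mBoundary_eq y, map_add]

lemma mBoundary_smul (a : ℝ) (x : MChains K (n + 1)) :
    mBoundary (a • x) = a • mBoundary x := by
  rw [mBoundary_eq, mBoundary_eq x, map_smul]

lemma mBoundary_finset_sum {ι : Type*} (s : Finset ι) (f : ι → MChains K (n + 1)) :
    mBoundary (∑ x ∈ s, f x) = ∑ x ∈ s, mBoundary (f x) := by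
  rw [mBoundary_eq, map_sum]
  exact Finset.sum_congr rfl fun x _ => (mBoundary_eq _).symm

/-- On finitely supported chains, the coefficientwise formula for the boundary agrees
with `mBoundary`. -/
lemma tsum_mul_coef (x : MChains K (n + 1)) (τ : AlgSimplex K n) :
    ∑' σ : AlgSimplex K (n + 1), x σ * mBoundary (Finsupp.single σ (1 : ℝ)) τ
      = mBoundary x τ := by
  rw [tsum_eq_sum (s := x.support)
    (fun σ hσ => by rw [Finsupp.notMem_support_iff.mp hσ, zero_mul])]
  rw [mBoundary_eq x, bnd, Finsupp.linearCombination_apply, Finsupp.sum_apply,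
    Finsupp.sum]
  refine Finset.sum_congr rfl fun σ _ => ?_
  rw [Finsupp.smul_apply, smul_eq_mul, mBoundary_eq, bnd_single]

end More
/-- If all elements of `Γ` are simplicially homotopic to the identity (in the operative
form of a uniform filling constant) and iterated diffusions of a cycle `c` have
exponentially decaying norms, then the class of `c` in ℓ¹-homology vanishes: `c` bounds an
ℓ¹-chain. -/
theorem l1_class_vanishes_of_decaying_diffusions (K : Multicomplex) (n : ℕ)
    (Γ : Subgroup K.Aut) (Kn : ℝ)
    (hhtpy : ∀ γ ∈ Γ, ∀ c : MChains K (n + 1), mBoundary c = 0 →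
      ∃ b : MChains K (n + 2), Multicomplex.Aut.actChain γ c - c = mBoundary b ∧
        mchainNorm b ≤ Kn * mchainNorm c)
    (c : MChains K (n + 1)) (hc : mBoundary c = 0)
    (μ : ℕ → (↥Γ →₀ ℝ)) (hμ₀ : ∀ i γ, 0 ≤ μ i γ) (hμ₁ : ∀ i, (μ i).sum (fun _ a => a) = 1)
    (cs : ℕ → MChains K (n + 1)) (hcs0 : cs 0 = c)
    (hcs : ∀ i, cs (i + 1) =
      (μ i).sum fun γ a => a • Multicomplex.Aut.actChain (γ : K.Aut) (cs i))
    (hdecay : ∀ i : ℕ, mchainNorm (cs i) ≤ (2 : ℝ)⁻¹ ^ i * mchainNorm c) :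
    ∃ b : L1MChains K (n + 2), ∀ τ, l1mBoundary b τ = c τ := by
  classical
  have hcsF : ∀ i, cs (i + 1) =
      ∑ γ ∈ (μ i).support, μ i γ • Multicomplex.Aut.actChain (γ : K.Aut) (cs i) :=
    fun i => hcs i
  have hμ₁' : ∀ i, (∑ γ ∈ (μ i).support, μ i γ) = 1 := fun i => hμ₁ i
  -- every diffusion is a cycle
  have hcycle : ∀ i, mBoundary (cs i) = 0 := by
    intro i
    induction i with
    | zero => rw [hcs0]; exact hc
    | succ i ih =>
      rw [hcsF i, mBoundary_finset_sum]
      apply Finset.sum_eq_zero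
      intro γ _
      rw [mBoundary_smul]
      obtain ⟨b, hb, -⟩ := hhtpy γ γ.2 (cs i) ih
      have h2 : Multicomplex.Aut.actChain (γ : K.Aut) (cs i) = mBoundary b + cs i := by
        rw [← hb, sub_add_cancel]
      rw [h2, mBoundary_add, mBoundary_mBoundary, ih, add_zero, smul_zero]
  -- choice of fillings
  have hBex : ∀ i, ∃ B : MChains K (n + 2),
      cs (i + 1) - cs i = mBoundary B ∧
        mchainNorm B ≤ |Kn| * ((2 : ℝ)⁻¹ ^ i * mchainNorm c) := by
    intro i
    choose bf hbf hbfn using fun γ : ↥Γ => hhtpy γ γ.2 (cs i) (hcycle i)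
    refine ⟨∑ γ ∈ (μ i).support, μ i γ • bf γ, ?_, ?_⟩
    · rw [mBoundary_finset_sum]
      have h1 : ∀ γ ∈ (μ i).support, mBoundary (μ i γ • bf γ)
          = μ i γ • Multicomplex.Aut.actChain (γ : K.Aut) (cs i) - μ i γ • cs i := by
        intro γ _
        rw [mBoundary_smul, ← hbf γ, smul_sub]
      rw [Finset.sum_congr rfl h1, Finset.sum_sub_distrib, ← hcsF i, ← Finset.sum_smul,
        hμ₁' i, one_smul]
    · refine (mchainNorm_sum_le _ _).trans ?_
      have h1 : ∀ γ ∈ (μ i).support,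
          mchainNorm (μ i γ • bf γ) ≤ μ i γ * (Kn * mchainNorm (cs i)) := by
        intro γ _
        refine (mchainNorm_smul_le _ _).trans ?_
        rw [abs_of_nonneg (hμ₀ i γ)]
        exact mul_le_mul_of_nonneg_left (hbfn γ) (hμ₀ i γ)
      refine (Finset.sum_le_sum h1).trans ?_
      rw [← Finset.sum_mul, hμ₁' i, one_mul]
      calc Kn * mchainNorm (cs i) ≤ |Kn| * mchainNorm (cs i) :=
            mul_le_mul_of_nonneg_right (le_abs_self Kn) (mchainNorm_nonneg _)
        _ ≤ |Kn| * ((2 : ℝ)⁻¹ ^ i * mchainNorm c) :=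
            mul_le_mul_of_nonneg_left (hdecay i) (abs_nonneg Kn)
  choose B hB1 hB2 using hBex
  -- summability facts
  set M : ℝ := |Kn| * mchainNorm c with hM
  have hgeo : Summable fun i : ℕ => ((2 : ℝ)⁻¹) ^ i :=
    summable_geometric_of_lt_one (by norm_num) (by norm_num)
  have hB2' : ∀ i, mchainNorm (B i) ≤ (2 : ℝ)⁻¹ ^ i * M := fun i =>
    (hB2 i).trans (le_of_eq (by rw [hM]; ring))
  have hsum1 : ∀ i, Summable fun σ => |(B i) σ| := fun i =>
    summable_of_ne_finset_zero (s := (B i).support) fun σ hσ => by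
      rw [Finsupp.notMem_support_iff.mp hσ, abs_zero]
  have htsum1 : ∀ i, (∑' σ, |(B i) σ|) = mchainNorm (B i) := fun i =>
    tsum_eq_sum fun σ hσ => by rw [Finsupp.notMem_support_iff.mp hσ, abs_zero]
  have hsum2 : Summable fun i => mchainNorm (B i) :=
    Summable.of_nonneg_of_le (fun i => mchainNorm_nonneg _) hB2' (hgeo.mul_right M)
  have hP : Summable fun p : ℕ × AlgSimplex K (n + 2) => |(B p.1) p.2| :=
    (summable_prod_of_nonneg fun p => abs_nonneg _).mpr
      ⟨hsum1, by simpa only [htsum1] using hsum2⟩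
  have hPσ : ∀ σ, Summable fun i => |(B i) σ| := fun σ =>
    hP.comp_injective (i := fun i : ℕ => ((i, σ) : ℕ × AlgSimplex K (n + 2)))
      fun a b h => by simpa using congrArg Prod.fst h
  have hbσ : ∀ σ, Summable fun i => (B i) σ := fun σ => (hPσ σ).of_abs
  set F : AlgSimplex K (n + 2) → ℝ := fun σ => -∑' i, (B i) σ with hFdef
  have hF1 : Summable fun σ => ∑' i, |(B i) σ| := by
    have h := hP.prod_symm
    exact ((summable_prod_of_nonneg fun p => abs_nonneg _).mp h).2
  have hFabs : ∀ σ, |F σ| ≤ ∑' i, |(B i) σ| := fun σ => by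
    rw [hFdef]
    dsimp only
    rw [abs_neg]
    simpa [Real.norm_eq_abs] using
      norm_tsum_le_tsum_norm (f := fun i => (B i) σ)
        (by simpa [Real.norm_eq_abs] using hPσ σ)
  have hFsum : Summable fun σ => |F σ| :=
    Summable.of_nonneg_of_le (fun _ => abs_nonneg _) hFabs hF1
  have hmem : Memℓp F 1 :=
    memℓp_gen (by simpa [Real.norm_eq_abs] using hFsum)
  refine ⟨⟨F, hmem⟩, fun τ => ?_⟩
  set k : AlgSimplex K (n + 2) → ℝ :=
    fun σ => mBoundary (Finsupp.single σ (1 : ℝ)) τ with hkdef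
  have hkb : ∀ σ, |k σ| ≤ ((n : ℝ) + 1) + 2 := fun σ => by
    simpa using coef_bound σ τ
  have hPk : Summable (Function.uncurry fun (i : ℕ) (σ : AlgSimplex K (n + 2)) =>
      -((B i) σ * k σ)) := by
    apply Summable.neg
    apply Summable.of_abs
    refine Summable.of_nonneg_of_le (fun p => abs_nonneg _) (fun p => ?_)
      (hP.mul_right (((n : ℝ) + 1) + 2))
    show |(B p.1) p.2 * k p.2| ≤ _
    rw [abs_mul]
    exact mul_le_mul_of_nonneg_left (hkb p.2) (abs_nonneg _)
  have step1 : l1mBoundary (⟨F, hmem⟩ : L1MChains K (n + 2)) τ = ∑' σ, F σ * k σ := rfl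
  rw [step1]
  have step2 : (∑' σ, F σ * k σ) = ∑' σ, ∑' i, -((B i) σ * k σ) := by
    refine tsum_congr fun σ => ?_
    rw [hFdef]
    dsimp only
    rw [neg_mul, ← tsum_mul_right, ← tsum_neg]
  have step3 : (∑' σ, ∑' i, -((B i) σ * k σ)) = ∑' i, ∑' σ, -((B i) σ * k σ) :=
    Summable.tsum_comm hPk
  have step4 : (∑' (i : ℕ), ∑' σ, -((B i) σ * k σ)) = ∑' i : ℕ, (cs i τ - cs (i + 1) τ) := by
    refine tsum_congr fun i => ?_
    rw [tsum_neg, hkdef]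
    rw [tsum_mul_coef (B i) τ, ← hB1 i, Finsupp.sub_apply, neg_sub]
  rw [step2, step3, step4]
  -- telescoping
  have hsummable : Summable fun i => cs i τ - cs (i + 1) τ := by
    apply Summable.of_abs
    refine Summable.of_nonneg_of_le (fun i => abs_nonneg _) (fun i => ?_)
      ((hgeo.mul_right (mchainNorm c)).add (hgeo.mul_right (2⁻¹ * mchainNorm c)))
    calc |cs i τ - cs (i + 1) τ| ≤ |cs i τ| + |cs (i + 1) τ| := abs_sub _ _
      _ ≤ (2 : ℝ)⁻¹ ^ i * mchainNorm c + (2 : ℝ)⁻¹ ^ (i + 1) * mchainNorm c :=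
          add_le_add ((abs_apply_le_mchainNorm _ _).trans (hdecay i))
            ((abs_apply_le_mchainNorm _ _).trans (hdecay (i + 1)))
      _ = (2 : ℝ)⁻¹ ^ i * mchainNorm c + (2 : ℝ)⁻¹ ^ i * (2⁻¹ * mchainNorm c) := by ring
  have h1 := hsummable.hasSum.tendsto_sum_nat
  have hps : (fun N => ∑ i ∈ Finset.range N, (cs i τ - cs (i + 1) τ))
      = fun N => cs 0 τ - cs N τ :=
    funext fun N => Finset.sum_range_sub' (fun i => cs i τ) N
  rw [hps] at h1
  have hlim0 : Filter.Tendsto (fun N => cs N τ) Filter.atTop (nhds 0) := by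
    rw [tendsto_zero_iff_abs_tendsto_zero]
    refine squeeze_zero (fun _ => abs_nonneg _)
      (fun N => (abs_apply_le_mchainNorm _ _).trans (hdecay N)) ?_
    have := (tendsto_pow_atTop_nhds_zero_of_lt_one
      (by norm_num : (0 : ℝ) ≤ 2⁻¹) (by norm_num)).mul_const (mchainNorm c)
    simpa using this
  have h3 : Filter.Tendsto (fun N => cs 0 τ - cs N τ) Filter.atTop (nhds (cs 0 τ - 0)) :=
    tendsto_const_nhds.sub hlim0
  rw [tendsto_nhds_unique h1 h3, hcs0, sub_zero]

end
end
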